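/- arXiv:2604.27427 — 9 statements merged into one kernel-verified Lean document; each statement's English description precedes it below -/
import Mathlib

section
/- Suppose X ⊆ R^n is a compact comonotone set under a permutation mapping Ψ: Π_n → Π_n. If Ψ is surjective, then X is standard comonotone, i.e., for every permutation π and every cost vector v sorted nonincreasingly by π, whenever max_{x∈X} v^T x is attained, there is a maximizer x* with x*_{π(1)} ≥ x*_{π(2)} ≥ ... ≥ x*_{π(n)}. -/
/-- The cone of vectors sorted in nonincreasing order along the permutation `π`. -/
def sortedCone (n : ℕ) (π : Equiv.Perm (Fin n)) : Set (Fin n → ℝ) :=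
  {x | ∀ i j : Fin n, i ≤ j → x (π j) ≤ x (π i)}

/-- `X` is comonotone under the permutation mapping `Ψ`: for every `π` and every cost
vector `v` sorted by `π`, whenever `max_{x ∈ X} vᵀx` is attained, some maximizer lies
in `Z(Ψ(π))`. -/
def IsComonotoneUnder (n : ℕ) (X : Set (Fin n → ℝ))
    (Ψ : Equiv.Perm (Fin n) → Equiv.Perm (Fin n)) : Prop :=
  ∀ (π : Equiv.Perm (Fin n)) (v : Fin n → ℝ), v ∈ sortedCone n π →
    (∃ x ∈ X, ∀ y ∈ X, ∑ i, v i * y i ≤ ∑ i, v i * x i) →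
    ∃ x ∈ X, (∀ y ∈ X, ∑ i, v i * y i ≤ ∑ i, v i * x i) ∧ x ∈ sortedCone n (Ψ π)

/-- Rearrangement inequality in the form we need: if `f` and `g` are both antitone on
`Fin n`, then `∑ f i * g (s i) ≤ ∑ f i * g i` for any permutation `s`. -/
lemma rearrange_aux (n : ℕ) (f g : Fin n → ℝ)
    (hf : ∀ i j : Fin n, i ≤ j → f j ≤ f i)
    (hg : ∀ i j : Fin n, i ≤ j → g j ≤ g i) (s : Equiv.Perm (Fin n)) :
    ∑ i, f i * g (s i) ≤ ∑ i, f i * g i := by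
  have hmono : Monovary f g := by
    intro i j hij
    rcases le_total i j with h | h
    · exact absurd hij (not_lt.2 (hg i j h))
    · exact hf j i h
  simpa [smul_eq_mul] using hmono.sum_smul_comp_perm_le_sum_smul (σ := s)

/-- A compact comonotone set under a surjective permutation mapping is
standard comonotone. -/
theorem stmt_2 (n : ℕ) (X : Set (Fin n → ℝ)) (hX : IsCompact X)
    (Ψ : Equiv.Perm (Fin n) → Equiv.Perm (Fin n))
    (hco : IsComonotoneUnder n X Ψ) (hsurj : Function.Surjective Ψ) :
    IsComonotoneUnder n X id := by
  intro π v hv hex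
  -- the "orbit" of π under Ψ
  set ρ : ℕ → Equiv.Perm (Fin n) := fun k => Ψ^[k] π with hρ
  -- the objective along the permutation τ : the values of v (in π-order) paired with x in τ-order
  set obj : Equiv.Perm (Fin n) → (Fin n → ℝ) → ℝ :=
    fun τ x => ∑ j, v (π j) * x (τ j) with hobj
  have hv' : ∀ i j : Fin n, i ≤ j → v (π j) ≤ v (π i) := hv
  -- the cost vector whose values are those of v, but sorted along τ
  set c : Equiv.Perm (Fin n) → (Fin n → ℝ) :=
    fun τ i => v (π (τ⁻¹ i)) with hc
  have hc_sorted : ∀ τ, c τ ∈ sortedCone n τ := by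
    intro τ i j hij
    simpa [hc] using hv' i j hij
  have hc_sum : ∀ τ (y : Fin n → ℝ), ∑ i, c τ i * y i = obj τ y := by
    intro τ y
    rw [← Equiv.sum_comp τ (fun i => c τ i * y i)]
    simp [hc, hobj]
  have hv_sum : ∀ y : Fin n → ℝ, ∑ i, v i * y i = obj π y := by
    intro y
    rw [← Equiv.sum_comp π (fun i => v i * y i)]
  -- rearrangement: if x is sorted along ρ', then obj τ x ≤ obj ρ' x for any τ
  have hrearr : ∀ (ρ' τ : Equiv.Perm (Fin n)) (x : Fin n → ℝ),
      x ∈ sortedCone n ρ' → obj τ x ≤ obj ρ' x := by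
    intro ρ' τ x hx
    have := rearrange_aux n (fun j => v (π j)) (fun j => x (ρ' j)) hv' hx (ρ'⁻¹ * τ)
    simpa [hobj, Equiv.Perm.mul_apply] using this
  -- objectives are continuous
  have hcont : ∀ τ, ContinuousOn (fun y => ∑ i, c τ i * y i) X := by
    intro τ
    exact (continuous_finset_sum _ fun i _ =>
      (continuous_const.mul (continuous_apply i))).continuousOn
  -- main induction: along the orbit we find points in the next cone dominating the original max
  have Q : ∀ k : ℕ, ∃ x ∈ X, x ∈ sortedCone n (ρ (k + 1)) ∧
      ∀ y ∈ X, (∑ i, v i * y i) ≤ obj (ρ (k + 1)) x := by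
    intro k
    induction k with
    | zero =>
      obtain ⟨x, hxX, hxmax, hxcone⟩ := hco π v hv hex
      have hρ1 : ρ 1 = Ψ π := by simp [hρ]
      refine ⟨x, hxX, by rw [hρ1]; exact hxcone, fun y hy => ?_⟩
      calc ∑ i, v i * y i ≤ ∑ i, v i * x i := hxmax y hy
        _ = obj π x := hv_sum x
        _ ≤ obj (ρ 1) x := by rw [hρ1]; exact hrearr (Ψ π) π x hxcone
    | succ k ih =>
      obtain ⟨x, hxX, hxcone, hxdom⟩ := ih
      set τ := ρ (k + 1) with hτ
      -- the maximum of the cost c τ over X is attained (compactness)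
      obtain ⟨z, hzX, hzmax⟩ := hX.exists_isMaxOn ⟨x, hxX⟩ (hcont τ)
      obtain ⟨x', hx'X, hx'max, hx'cone⟩ :=
        hco τ (c τ) (hc_sorted τ) ⟨z, hzX, fun y hy => hzmax hy⟩
      have hρ2 : ρ (k + 2) = Ψ τ := by
        simp only [hρ, hτ]
        exact Function.iterate_succ_apply' Ψ (k + 1) π
      refine ⟨x', hx'X, by rw [hρ2]; exact hx'cone, fun y hy => ?_⟩
      have h1 : obj τ x ≤ obj τ x' := by
        rw [← hc_sum, ← hc_sum]; exact hx'max x hxX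
      calc ∑ i, v i * y i ≤ obj τ x := hxdom y hy
        _ ≤ obj τ x' := h1
        _ ≤ obj (ρ (k + 2)) x' := by rw [hρ2]; exact hrearr (Ψ τ) τ x' hx'cone
  -- Ψ is bijective, hence some iterate fixes π
  have hbij : Function.Bijective Ψ := hsurj.bijective_of_finite
  set e : Equiv.Perm (Equiv.Perm (Fin n)) := Equiv.ofBijective Ψ hbij with he
  have hiter : ∀ (m : ℕ) (σ : Equiv.Perm (Fin n)), Ψ^[m] σ = (e ^ m) σ := by
    intro m
    induction m with
    | zero => intro σ; simp
    | succ m ih =>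
      intro σ
      rw [Function.iterate_succ_apply, pow_succ, Equiv.Perm.mul_apply, ih]
      rfl
  have hordpos : 0 < orderOf e := orderOf_pos e
  obtain ⟨m, hm⟩ : ∃ m, orderOf e = m + 1 :=
    Nat.exists_eq_succ_of_ne_zero (Nat.pos_iff_ne_zero.mp hordpos)
  have hfix : ρ (m + 1) = π := by
    show Ψ^[m + 1] π = π
    rw [hiter, ← hm, pow_orderOf_eq_one e]
    rfl
  obtain ⟨x, hxX, hxcone, hxdom⟩ := Q m
  refine ⟨x, hxX, fun y hy => ?_, ?_⟩
  · have := hxdom y hy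
    rwa [hfix, ← hv_sum] at this
  · show x ∈ sortedCone n π
    rwa [hfix] at hxcone
end

section
/- Let X ⊆ R^n be compact and nonempty. Then X is standard comonotone if and only if for every v ∈ R^n, every maximizer x* of v^T x over X, and all indices i, j ∈ {1,...,n}, one has (v_i - v_j)(x*_i - x*_j) ≥ 0. -/
/-- `X` is standard comonotone. -/
def StandardComonotone (n : ℕ) (X : Set (Fin n → ℝ)) : Prop :=
  ∀ (π : Equiv.Perm (Fin n)) (v : Fin n → ℝ), v ∈ sortedCone n π →
    (∃ x ∈ X, ∀ y ∈ X, ∑ i, v i * y i ≤ ∑ i, v i * x i) →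
    ∃ x ∈ X, (∀ y ∈ X, ∑ i, v i * y i ≤ ∑ i, v i * x i) ∧ x ∈ sortedCone n π

private lemma contL {n : ℕ} (c : Fin n → ℝ) :
    Continuous (fun p : Fin n → ℝ => ∑ i, c i * p i) :=
  continuous_finset_sum _ fun i _ => continuous_const.mul (continuous_apply i)

private lemma exists_max {n : ℕ} {X : Set (Fin n → ℝ)} (hX : IsCompact X)
    (hne : X.Nonempty) (c : Fin n → ℝ) :
    ∃ x ∈ X, ∀ y ∈ X, ∑ i, c i * y i ≤ ∑ i, c i * x i := by
  obtain ⟨x, hx, hmax⟩ := hX.exists_isMaxOn hne (contL c).continuousOn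
  exact ⟨x, hx, fun y hy => hmax hy⟩

/-- key lemma for the forward direction -/
private lemma forward_key {n : ℕ} {X : Set (Fin n → ℝ)} (hX : IsCompact X)
    (hne : X.Nonempty) (hSC : StandardComonotone n X)
    (v xs : Fin n → ℝ) (hxs : xs ∈ X)
    (hmax : ∀ y ∈ X, ∑ i, v i * y i ≤ ∑ i, v i * xs i)
    (i j : Fin n) (hvij : v j < v i) (hxij : xs i < xs j) : False := by
  have hij : i ≠ j := by rintro rfl; exact lt_irrefl _ hvij
  set t : ℝ := (v i - v j) / 3 with ht
  have ht0 : 0 < t := by simp only [ht]; linarith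
  set u : Fin n → ℝ := fun k => v k + (if k = j then t else 0) - (if k = i then t else 0)
    with hu
  have huj : u j = v j + t := by simp [hu, Ne.symm hij]
  have hui : u i = v i - t := by simp [hu, hij]
  have huij : u j < u i := by rw [huj, hui, ht]; linarith
  -- expansion of the linear form for u
  have expand : ∀ y : Fin n → ℝ,
      ∑ k, u k * y k = (∑ k, v k * y k) + t * y j - t * y i := by
    intro y
    have : ∀ k, u k * y k
        = v k * y k + (if k = j then t * y k else 0) - (if k = i then t * y k else 0) := by
      intro k
      simp only [hu]
      split_ifs <;> ring
    rw [Finset.sum_congr rfl fun k _ => this k, Finset.sum_sub_distrib,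
      Finset.sum_add_distrib, Finset.sum_ite_eq' Finset.univ j (fun k => t * y k),
      Finset.sum_ite_eq' Finset.univ i (fun k => t * y k)]
    simp
  -- a permutation sorting u nonincreasingly
  set σ := Tuple.sort (fun k => -u k) with hσ
  have hsorted : u ∈ sortedCone n σ := by
    intro a b hab
    have := Tuple.monotone_sort (fun k => -u k) hab
    simpa [hσ] using this
  obtain ⟨x, hxX, hxmax, hxcone⟩ := hSC σ u hsorted (exists_max hX hne u)
  -- since u i > u j, σ places i before j, hence x j ≤ x i
  have hxji : x j ≤ x i := by
    have ha : σ (σ.symm i) = i := σ.apply_symm_apply i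
    have hb : σ (σ.symm j) = j := σ.apply_symm_apply j
    rcases le_or_gt (σ.symm j) (σ.symm i) with h | h
    · exfalso
      have := hsorted _ _ h
      rw [ha, hb] at this
      exact absurd this (not_le.mpr huij)
    · have := hxcone _ _ h.le
      rwa [ha, hb] at this
  have h1 : ∑ k, u k * xs k ≤ ∑ k, u k * x k := hxmax xs hxs
  rw [expand xs, expand x] at h1
  have h2 : ∑ k, v k * x k ≤ ∑ k, v k * xs k := hmax x hxX
  nlinarith

/-- A compact nonempty set is standard comonotone iff every maximizer of every linear
objective satisfies the pairwise comonotonicity relation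
`(vᵢ - vⱼ)(x*ᵢ - x*ⱼ) ≥ 0`. -/
theorem stmt_5 (n : ℕ) (X : Set (Fin n → ℝ)) (hX : IsCompact X) (hne : X.Nonempty) :
    StandardComonotone n X ↔
      ∀ (v : Fin n → ℝ) (xs : Fin n → ℝ), xs ∈ X →
        (∀ y ∈ X, ∑ i, v i * y i ≤ ∑ i, v i * xs i) →
        ∀ i j : Fin n, 0 ≤ (v i - v j) * (xs i - xs j) := by
  constructor
  · intro hSC v xs hxs hmax i j
    by_contra hlt
    push_neg at hlt
    rcases mul_neg_iff.mp hlt with ⟨h1, h2⟩ | ⟨h1, h2⟩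
    · exact forward_key hX hne hSC v xs hxs hmax i j (by linarith) (by linarith)
    · exact forward_key hX hne hSC v xs hxs hmax j i (by linarith) (by linarith)
  · intro H π v hv _
    -- strictly decreasing tie-breaker along π
    set w : Fin n → ℝ := fun k => (n : ℝ) - ((π.symm k : Fin n) : ℕ) with hw
    set u : ℕ → Fin n → ℝ := fun m i => v i + (1 / (m + 1 : ℝ)) * w i with hu
    have hεpos : ∀ m : ℕ, (0:ℝ) < 1 / (m + 1 : ℝ) := fun m => by positivity
    have hx : ∀ m : ℕ, ∃ x ∈ X, ∀ y ∈ X, ∑ i, u m i * y i ≤ ∑ i, u m i * x i :=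
      fun m => exists_max hX hne (u m)
    choose x hxX hxmax using hx
    -- each x m is sorted along π
    have hxsorted : ∀ m, x m ∈ sortedCone n π := by
      intro m a b hab
      rcases eq_or_lt_of_le hab with rfl | hab'
      · exact le_refl _
      have hwd : w (π b) < w (π a) := by
        simp only [hw, Equiv.symm_apply_apply]
        have : (a : ℕ) < (b : ℕ) := hab'
        have : ((a : ℕ) : ℝ) < ((b : ℕ) : ℝ) := by exact_mod_cast this
        linarith
      have hvd : v (π b) ≤ v (π a) := hv a b hab
      have hud : u m (π b) < u m (π a) := by
        simp only [hu]
        nlinarith [mul_pos (hεpos m) (sub_pos.mpr hwd)]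
      have := H (u m) (x m) (hxX m) (hxmax m) (π a) (π b)
      nlinarith
    obtain ⟨xb, hxbX, φ, hφ, htend⟩ := hX.tendsto_subseq hxX
    have hφtop : Filter.Tendsto φ Filter.atTop Filter.atTop := hφ.tendsto_atTop
    have hεtend : Filter.Tendsto (fun k => 1 / ((φ k : ℝ) + 1)) Filter.atTop (nhds 0) :=
      (tendsto_one_div_add_atTop_nhds_zero_nat).comp hφtop
    have expand : ∀ (m : ℕ) (y : Fin n → ℝ),
        ∑ i, u m i * y i = (∑ i, v i * y i) + (1 / (m + 1 : ℝ)) * ∑ i, w i * y i := by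
      intro m y
      rw [Finset.mul_sum, ← Finset.sum_add_distrib]
      exact Finset.sum_congr rfl fun i _ => by simp only [hu]; ring
    refine ⟨xb, hxbX, ?_, ?_⟩
    · intro y hy
      have h1 : Filter.Tendsto (fun k => ∑ i, u (φ k) i * y i) Filter.atTop
          (nhds (∑ i, v i * y i)) := by
        simp only [expand]
        simpa using tendsto_const_nhds.add (hεtend.mul_const (∑ i, w i * y i))
      have hxt : ∀ c : Fin n → ℝ, Filter.Tendsto (fun k => ∑ i, c i * x (φ k) i)
          Filter.atTop (nhds (∑ i, c i * xb i)) := fun c => ((contL c).tendsto xb).comp htend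
      have h2 : Filter.Tendsto (fun k => ∑ i, u (φ k) i * x (φ k) i) Filter.atTop
          (nhds (∑ i, v i * xb i)) := by
        simp only [expand]
        simpa using (hxt v).add (hεtend.mul (hxt w))
      exact le_of_tendsto_of_tendsto' h1 h2 fun k => hxmax (φ k) y hy
    · intro a b hab
      have hta : Filter.Tendsto (fun k => x (φ k) (π a)) Filter.atTop (nhds (xb (π a))) :=
        ((continuous_apply (π a)).tendsto xb).comp htend
      have htb : Filter.Tendsto (fun k => x (φ k) (π b)) Filter.atTop (nhds (xb (π b))) :=
        ((continuous_apply (π b)).tendsto xb).comp htend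
      exact le_of_tendsto_of_tendsto' htb hta fun k => hxsorted (φ k) a b hab
end

section
/- Let X ⊆ R^n be compact and nonempty. Then X is standard comonotone if and only if for every v ∈ R^n and all indices i, j with v_i = v_j, there exist maximizers x̄ and x̃ of v^T x over X satisfying x̄_i ≥ x̄_j and x̃_i ≤ x̃_j. -/
namespace SC6
variable {n : ℕ}

noncomputable def dot (v x : Fin n → ℝ) : ℝ := ∑ i, v i * x i

def AMax (v : Fin n → ℝ) (Y : Set (Fin n → ℝ)) : Set (Fin n → ℝ) :=
  {x | x ∈ Y ∧ ∀ y ∈ Y, dot v y ≤ dot v x}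

lemma dot_continuous (v : Fin n → ℝ) : Continuous (dot v) := by
  unfold dot; exact continuous_finset_sum _ fun i _ => (continuous_const.mul (continuous_apply i))

lemma AMax_subset (v : Fin n → ℝ) (Y : Set (Fin n → ℝ)) : AMax v Y ⊆ Y := fun x hx => hx.1

lemma AMax_nonempty {Y : Set (Fin n → ℝ)} (hc : IsCompact Y) (hne : Y.Nonempty)
    (v : Fin n → ℝ) : (AMax v Y).Nonempty := by
  obtain ⟨x, hxY, hx⟩ := hc.exists_isMaxOn hne (dot_continuous v).continuousOn
  exact ⟨x, hxY, fun y hy => hx hy⟩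

lemma AMax_compact {Y : Set (Fin n → ℝ)} (hc : IsCompact Y) (v : Fin n → ℝ) :
    IsCompact (AMax v Y) := by
  have h : AMax v Y = Y ∩ ⋂ y ∈ Y, {x | dot v y ≤ dot v x} := by
    ext x; simp [AMax, Set.mem_iInter]
  rw [h]
  exact hc.inter_right (isClosed_biInter fun y _ =>
    isClosed_le continuous_const (dot_continuous v))

lemma dot_add_smul (u w x : Fin n → ℝ) (ε : ℝ) :
    dot (u + ε • w) x = dot u x + ε * dot w x := by
  unfold dot
  rw [Finset.mul_sum, ← Finset.sum_add_distrib]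
  congr 1; ext i; simp [Pi.add_apply, Pi.smul_apply]; ring

def Hpair1 (Y : Set (Fin n → ℝ)) (i j : Fin n) : Prop :=
  ∀ w : Fin n → ℝ, w i = w j → ∃ x ∈ AMax w Y, x j ≤ x i

lemma hpair1_step {Y : Set (Fin n → ℝ)} (hc : IsCompact Y) {i j : Fin n}
    (hp : Hpair1 Y i j) {u : Fin n → ℝ} (hu : u i = u j) :
    Hpair1 (AMax u Y) i j := by
  intro w hw
  have hsel : ∀ m : ℕ, ∃ x ∈ AMax (u + (1/((m:ℝ)+1)) • w) Y, x j ≤ x i := by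
    intro m
    exact hp _ (by simp [Pi.add_apply, Pi.smul_apply, hu, hw])
  choose f hf1 hf2 using hsel
  obtain ⟨y, hyY, φ, hφ, hlim⟩ := hc.isSeqCompact (fun m => (hf1 m).1)
  have hcoord : ∀ k : Fin n, Filter.Tendsto (fun m => f (φ m) k) Filter.atTop (nhds (y k)) :=
    fun k => ((continuous_apply k).tendsto y).comp hlim
  have hdot : ∀ vv : Fin n → ℝ,
      Filter.Tendsto (fun m => dot vv (f (φ m))) Filter.atTop (nhds (dot vv y)) :=
    fun vv => (((dot_continuous vv)).tendsto y).comp hlim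
  have heps : Filter.Tendsto (fun m => 1/((φ m : ℝ)+1)) Filter.atTop (nhds 0) :=
    tendsto_one_div_add_atTop_nhds_zero_nat.comp hφ.tendsto_atTop
  have hepspos : ∀ m : ℕ, (0:ℝ) < 1/((m:ℝ)+1) := fun m => by positivity
  have hymax : ∀ z ∈ Y, dot u z ≤ dot u y := by
    intro z hz
    have step : ∀ m, dot u z + (1/((φ m : ℝ)+1)) * dot w z
        ≤ dot u (f (φ m)) + (1/((φ m : ℝ)+1)) * dot w (f (φ m)) := by
      intro m
      have h := (hf1 (φ m)).2 z hz
      rwa [dot_add_smul, dot_add_smul] at h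
    have t1 : Filter.Tendsto (fun m => dot u z + (1/((φ m : ℝ)+1)) * dot w z)
        Filter.atTop (nhds (dot u z)) := by
      simpa using (tendsto_const_nhds.add (heps.mul tendsto_const_nhds))
    have t2 : Filter.Tendsto (fun m => dot u (f (φ m)) + (1/((φ m : ℝ)+1)) * dot w (f (φ m)))
        Filter.atTop (nhds (dot u y)) := by
      simpa using ((hdot u).add (heps.mul (hdot w)))
    exact le_of_tendsto_of_tendsto' t1 t2 step
  have hwmax : ∀ z ∈ AMax u Y, dot w z ≤ dot w y := by
    rintro z ⟨hzY, hzmax⟩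
    have step : ∀ m, dot w z ≤ dot w (f (φ m)) := by
      intro m
      have h1 : dot u (f (φ m)) ≤ dot u z := hzmax _ (hf1 (φ m)).1
      have h2 := (hf1 (φ m)).2 z hzY
      rw [dot_add_smul, dot_add_smul] at h2
      have h3 := hepspos (φ m)
      nlinarith
    exact le_of_tendsto_of_tendsto' tendsto_const_nhds (hdot w) step
  exact ⟨y, ⟨⟨hyY, hymax⟩, hwmax⟩, le_of_tendsto_of_tendsto' (hcoord j) (hcoord i)
    (fun m => hf2 (φ m))⟩

noncomputable def chainW (π : Equiv.Perm (Fin n)) (v : Fin n → ℝ) : ℕ → (Fin n → ℝ)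
  | 0 => v
  | (s+1) => fun idx => if ((π.symm idx : ℕ) = s) then 1 else 0

def chainS (π : Equiv.Perm (Fin n)) (v : Fin n → ℝ) (X : Set (Fin n → ℝ)) :
    ℕ → Set (Fin n → ℝ)
  | 0 => X
  | (t+1) => AMax (chainW π v t) (chainS π v X t)

lemma dot_chainW_succ {i : Fin n} (x : Fin n → ℝ) (π : Equiv.Perm (Fin n)) (k : ℕ)
    (hkn : k < n) (hi : i = π ⟨k, hkn⟩) (v : Fin n → ℝ) :
    dot (chainW π v (k+1)) x = x i := by
  unfold dot chainW
  have h : ∀ idx : Fin n, ((π.symm idx : ℕ) = k) ↔ idx = i := by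
    intro idx
    rw [hi]
    constructor
    · intro h
      have h' : π.symm idx = ⟨k, hkn⟩ := Fin.ext h
      rw [← h', Equiv.apply_symm_apply]
    · intro h; rw [h, Equiv.symm_apply_apply]
  simp only [h]
  simp [ite_mul]

lemma dot_pair {i j : Fin n} (hij : i ≠ j) (x : Fin n → ℝ) :
    dot (fun idx => if idx = i ∨ idx = j then (1:ℝ) else 0) x = x i + x j := by
  unfold dot
  have h : ∀ idx : Fin n, (if idx = i ∨ idx = j then (1:ℝ) else 0) * x idx
      = (if idx = i then x idx else 0) + (if idx = j then x idx else 0) := by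
    intro idx
    by_cases h1 : idx = i <;> by_cases h2 : idx = j <;> simp_all
  rw [Finset.sum_congr rfl (fun idx _ => h idx), Finset.sum_add_distrib]
  simp

lemma dot_update {i j : Fin n} (hij : i ≠ j) (v x : Fin n → ℝ) (μ : ℝ) :
    dot (Function.update (Function.update v i μ) j μ) x
      = dot v x + (μ - v i) * x i + (μ - v j) * x j := by
  unfold dot
  have h : ∀ idx : Fin n, Function.update (Function.update v i μ) j μ idx * x idx
      = v idx * x idx + (if idx = i then (μ - v i) * x idx else 0)
        + (if idx = j then (μ - v j) * x idx else 0) := by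
    intro idx
    rcases eq_or_ne idx i with h1 | h1 <;> rcases eq_or_ne idx j with h2 | h2 <;>
      simp_all [Function.update_apply] <;> ring
  rw [Finset.sum_congr rfl (fun idx _ => h idx), Finset.sum_add_distrib,
    Finset.sum_add_distrib]
  simp

lemma chainS_cn {π : Equiv.Perm (Fin n)} {v : Fin n → ℝ} {X : Set (Fin n → ℝ)}
    (hX : IsCompact X) (hne : X.Nonempty) (t : ℕ) :
    IsCompact (chainS π v X t) ∧ (chainS π v X t).Nonempty := by
  induction t with
  | zero => exact ⟨hX, hne⟩
  | succ s ih => exact ⟨AMax_compact ih.1 _, AMax_nonempty ih.1 ih.2 _⟩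

lemma chainS_le {π : Equiv.Perm (Fin n)} {v : Fin n → ℝ} {X : Set (Fin n → ℝ)}
    {s t : ℕ} (h : s ≤ t) : chainS π v X t ⊆ chainS π v X s := by
  induction t with
  | zero => have hs : s = 0 := Nat.le_zero.mp h; subst hs; exact subset_rfl
  | succ t ih =>
    rcases Nat.eq_or_lt_of_le h with h' | h'
    · subst h'; exact subset_rfl
    · exact fun x hx => ih (by omega) (AMax_subset _ _ hx)

end SC6

/-- A compact nonempty set is standard comonotone iff for every cost vector `v` and all
tied indices `i, j` (with `vᵢ = vⱼ`) there exist maximizers `x̄` and `x̃` of `vᵀx` over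
`X` with `x̄ᵢ ≥ x̄ⱼ` and `x̃ᵢ ≤ x̃ⱼ`. -/
theorem stmt_6 (n : ℕ) (X : Set (Fin n → ℝ)) (hX : IsCompact X) (hne : X.Nonempty) :
    StandardComonotone n X ↔
      ∀ (v : Fin n → ℝ) (i j : Fin n), v i = v j →
        (∃ xb ∈ X, (∀ y ∈ X, ∑ k, v k * y k ≤ ∑ k, v k * xb k) ∧ xb j ≤ xb i) ∧
        (∃ xt ∈ X, (∀ y ∈ X, ∑ k, v k * y k ≤ ∑ k, v k * xt k) ∧ xt i ≤ xt j) := by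
  constructor
  · -- forward direction
    intro hSC v i j hvij
    have hexmax : ∃ x ∈ X, ∀ y ∈ X, ∑ k, v k * y k ≤ ∑ k, v k * x k := by
      obtain ⟨x, hx1, hx2⟩ := SC6.AMax_nonempty hX hne v
      exact ⟨x, hx1, hx2⟩
    have key : ∀ a b : Fin n, v a = v b →
        ∃ x ∈ X, (∀ y ∈ X, ∑ k, v k * y k ≤ ∑ k, v k * x k) ∧ x b ≤ x a := by
      intro a b hab
      rcases eq_or_ne a b with rfl | hab'
      · obtain ⟨x, hx1, hx2⟩ := hexmax
        exact ⟨x, hx1, hx2, le_refl _⟩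
      · have hmon : Monotone ((fun k => - v k) ∘ Tuple.sort (fun k => - v k)) :=
          Tuple.monotone_sort _
        set σ0 := Tuple.sort (fun k => - v k) with hσ0
        have hcone0 : v ∈ sortedCone n σ0 := by
          intro p q hpq
          have h := hmon hpq
          simpa using h
        by_cases hord : σ0.symm a ≤ σ0.symm b
        · obtain ⟨x, hxX, hxmax, hxcone⟩ := hSC σ0 v hcone0 hexmax
          have h := hxcone _ _ hord
          rw [Equiv.apply_symm_apply, Equiv.apply_symm_apply] at h
          exact ⟨x, hxX, hxmax, h⟩
        · set A := σ0.symm a with hA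
          set B := σ0.symm b with hB
          set σ : Equiv.Perm (Fin n) := σ0 * Equiv.swap A B with hσ
          have happ : ∀ x, σ x = σ0 (Equiv.swap A B x) := fun x => rfl
          have hvσ : ∀ x, v (σ x) = v (σ0 x) := by
            intro x
            rcases eq_or_ne x A with rfl | hxA
            · rw [happ, Equiv.swap_apply_left]
              have h1 : σ0 B = b := by rw [hB, Equiv.apply_symm_apply]
              have h2 : σ0 A = a := by rw [hA, Equiv.apply_symm_apply]
              rw [h1, h2, hab]
            · rcases eq_or_ne x B with rfl | hxB
              · rw [happ, Equiv.swap_apply_right]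
                have h1 : σ0 B = b := by rw [hB, Equiv.apply_symm_apply]
                have h2 : σ0 A = a := by rw [hA, Equiv.apply_symm_apply]
                rw [h1, h2, hab]
              · rw [happ, Equiv.swap_apply_of_ne_of_ne hxA hxB]
          have hcone : v ∈ sortedCone n σ := by
            intro p q hpq
            rw [hvσ p, hvσ q]
            exact hcone0 p q hpq
          have hσa : σ.symm a = B := by
            rw [Equiv.symm_apply_eq, happ, Equiv.swap_apply_right, hA,
              Equiv.apply_symm_apply]
          have hσb : σ.symm b = A := by
            rw [Equiv.symm_apply_eq, happ, Equiv.swap_apply_left, hB,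
              Equiv.apply_symm_apply]
          have hord2 : σ.symm a ≤ σ.symm b := by
            rw [hσa, hσb]
            exact le_of_lt (not_le.mp hord)
          obtain ⟨x, hxX, hxmax, hxcone⟩ := hSC σ v hcone hexmax
          have h := hxcone _ _ hord2
          rw [Equiv.apply_symm_apply, Equiv.apply_symm_apply] at h
          exact ⟨x, hxX, hxmax, h⟩
    exact ⟨key i j hvij, key j i hvij.symm⟩
  · -- backward direction
    intro hRH π v hv _hex
    have hH : ∀ a b : Fin n, SC6.Hpair1 X a b := by
      intro a b w hw
      obtain ⟨⟨xb, hxbX, hxbmax, hxbo⟩, -⟩ := hRH w a b hw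
      exact ⟨xb, ⟨hxbX, fun y hy => hxbmax y hy⟩, hxbo⟩
    obtain ⟨xs, hxs⟩ := (SC6.chainS_cn (π := π) (v := v) hX hne (n+1)).2
    have hxs1 : xs ∈ SC6.AMax v X := SC6.chainS_le (show 1 ≤ n+1 by omega) hxs
    obtain ⟨hxsX, hxsmax⟩ := hxs1
    have hadj : ∀ k (hk1 : k + 1 < n),
        xs (π ⟨k+1, hk1⟩) ≤ xs (π ⟨k, by omega⟩) := by
      intro k hk1
      obtain ⟨i, hi⟩ : ∃ i, i = π ⟨k, by omega⟩ := ⟨_, rfl⟩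
      obtain ⟨j, hj⟩ : ∃ j, j = π ⟨k+1, hk1⟩ := ⟨_, rfl⟩
      rw [← hi, ← hj]
      have hij : i ≠ j := by
        rw [hi, hj]
        intro h
        have h2 := π.injective h
        rw [Fin.mk.injEq] at h2
        omega
      have hvji : v j ≤ v i := by
        rw [hi, hj]
        exact hv ⟨k, by omega⟩ ⟨k+1, hk1⟩ (by rw [Fin.mk_le_mk]; omega)
      rcases eq_or_lt_of_le hvji with heq | hlt
      · -- tie case
        have hp1 : ∀ t, t ≤ k + 1 → SC6.Hpair1 (SC6.chainS π v X t) i j := by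
          intro t
          induction t with
          | zero => exact fun _ => hH i j
          | succ s ih =>
            intro hs
            have hws : SC6.chainW π v s i = SC6.chainW π v s j := by
              match s with
              | 0 => exact heq.symm
              | (r+1) =>
                show (if ((π.symm i : ℕ) = r) then (1:ℝ) else 0)
                  = (if ((π.symm j : ℕ) = r) then (1:ℝ) else 0)
                have h1 : (π.symm i : ℕ) = k := by rw [hi, Equiv.symm_apply_apply]
                have h2 : (π.symm j : ℕ) = k+1 := by rw [hj, Equiv.symm_apply_apply]
                rw [h1, h2, if_neg (by omega), if_neg (by omega)]
            exact SC6.hpair1_step (SC6.chainS_cn hX hne s).1 (ih (by omega)) hws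
        have hxs2 : xs ∈ SC6.AMax (SC6.chainW π v (k+1)) (SC6.chainS π v X (k+1)) :=
          SC6.chainS_le (show k+2 ≤ n+1 by omega) hxs
        obtain ⟨hxsS1, hxsW⟩ := hxs2
        obtain ⟨y, ⟨hyS, hymax⟩, hyji⟩ := hp1 (k+1) (le_refl _)
          (fun idx => if idx = i ∨ idx = j then (1:ℝ) else 0) (by simp)
        have h1 : xs i + xs j ≤ y i + y j := by
          have h := hymax xs hxsS1
          rwa [SC6.dot_pair hij, SC6.dot_pair hij] at h
        have h2 : y i ≤ xs i := by
          have h := hxsW y hyS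
          rwa [SC6.dot_chainW_succ y π k (by omega) hi v,
            SC6.dot_chainW_succ xs π k (by omega) hi v] at h
        linarith
      · -- strict case
        obtain ⟨q, ⟨hqX, hqmax⟩, hqji⟩ := hH i j
          (Function.update (Function.update v i ((v i + v j)/2)) j ((v i + v j)/2))
          (by rw [Function.update_of_ne hij, Function.update_self, Function.update_self])
        have h1 := hqmax xs hxsX
        rw [SC6.dot_update hij, SC6.dot_update hij] at h1
        have h2 : SC6.dot v q ≤ SC6.dot v xs := hxsmax q hqX
        have hδ : (0:ℝ) < v i - (v i + v j)/2 := by linarith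
        nlinarith [h1, h2, hqji, hδ, mul_nonneg (le_of_lt hδ) (sub_nonneg.mpr hqji)]
    refine ⟨xs, hxsX, fun y hy => hxsmax y hy, ?_⟩
    have main : ∀ d p (h : p + d < n), xs (π ⟨p + d, h⟩) ≤ xs (π ⟨p, by omega⟩) := by
      intro d
      induction d with
      | zero => intro p h; exact le_refl _
      | succ d ih =>
        intro p h
        have h' : p + d < n := by omega
        have step : xs (π ⟨p + (d+1), h⟩) ≤ xs (π ⟨p + d, h'⟩) := hadj (p + d) h
        exact le_trans step (ih p h')
    intro p q hpq
    have hq : q = ⟨p.val + (q.val - p.val), by omega⟩ := Fin.ext (by simp; omega)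
    rw [hq]
    exact main (q.val - p.val) p.val (by omega)
end

section
/- Let X ⊆ R^n be compact and nonempty. Then X is standard comonotone if and only if its convex hull conv(X) is standard comonotone. -/
/-!
A linear functional has the same maximum on `X` as on `conv X`, so a sorted maximizer in `X` is
one in `conv X`. Conversely, take the face of `conv X` maximizing a sorted `v` and refine it
lexicographically by the prefix indicators of `π 0, …, π (n - 1)`. These functionals are sorted and
determine every coordinate, so the final face is a single point `z`: an extreme point of `conv X`,
hence a point of `X`. It is sorted because "every sorted functional has a sorted maximizer" passes
from a compact set to its face maximizing a sorted `u`: maximizers of `u + t • u'` accumulate, as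
`t → 0⁺`, at maximizers of `u'` on that face, and the sorted cone is closed. Compactness of `conv X`
comes from Carathéodory's theorem.
-/

open Module in
theorem isCompact_convexHull {E : Type*} [AddCommGroup E] [Module ℝ E] [TopologicalSpace E]
    [ContinuousAdd E] [ContinuousSMul ℝ E] [FiniteDimensional ℝ E] {s : Set E}
    (hs : IsCompact s) : IsCompact (convexHull ℝ s) := by
  let combination (k : ℕ) (p : (Fin k → ℝ) × (Fin k → E)) : E := ∑ i, p.1 i • p.2 i
  suffices h : convexHull ℝ s = ⋃ k : Fin (finrank ℝ E + 2),
      combination k '' (stdSimplex ℝ (Fin k) ×ˢ Set.univ.pi fun _ => s) by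
    rw [h]
    refine isCompact_iUnion fun k => ((isCompact_stdSimplex ℝ _).prod
      (isCompact_univ_pi fun _ => hs)).image ?_
    fun_prop
  refine subset_antisymm (fun x hx => ?_) (Set.iUnion_subset fun k => ?_)
  · obtain ⟨ι, _, z, w, hzs, hz, hw₀, hw₁, rfl⟩ := eq_pos_convex_span_of_mem_convexHull hx
    have hcard : Fintype.card ι < finrank ℝ E + 2 :=
      Nat.lt_succ_of_le (hz.card_le_finrank_succ.trans (by gcongr; exact Submodule.finrank_le _))
    let e := (Fintype.equivFin ι).symm
    refine Set.mem_iUnion.2 ⟨⟨_, hcard⟩, (w ∘ e, z ∘ e), ⟨⟨fun i => (hw₀ _).le, ?_⟩,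
      fun i _ => hzs ⟨_, rfl⟩⟩, e.sum_comp fun i => w i • z i⟩
    simpa [e.sum_comp] using hw₁
  · rintro _ ⟨⟨w, z⟩, ⟨⟨hw₀, hw₁⟩, hz⟩, rfl⟩
    exact (convex_convexHull ℝ s).sum_mem (fun i _ => hw₀ i) hw₁
      fun i _ => subset_convexHull ℝ s (hz i trivial)

section MaxFace

variable {ι : Type*} [Fintype ι] {C : Set (ι → ℝ)} {u v x y : ι → ℝ}

def maxFace (v : ι → ℝ) (C : Set (ι → ℝ)) : Set (ι → ℝ) :=
  {x ∈ C | ∀ y ∈ C, v ⬝ᵥ y ≤ v ⬝ᵥ x}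

lemma maxFace_subset : maxFace v C ⊆ C := fun _ hx => hx.1

lemma maxFace_nonempty (hC : IsCompact C) (hne : C.Nonempty) : (maxFace v C).Nonempty := by
  obtain ⟨x, hx, hmax⟩ :=
    hC.exists_isMaxOn hne (continuous_const.dotProduct continuous_id).continuousOn
  exact ⟨x, hx, fun y hy => hmax hy⟩

lemma isExposed_maxFace : IsExposed ℝ C (maxFace v C) :=
  ContinuousLinearMap.toExposed.isExposed (l :=
    LinearMap.toContinuousLinearMap (dotProductBilin ℝ ℝ v))

lemma maxFace_subset_maxFace_convexHull : maxFace v C ⊆ maxFace v (convexHull ℝ C) :=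
  fun _ hx => ⟨subset_convexHull ℝ C hx.1, fun _ hy =>
    convexHull_min hx.2 (convex_halfSpace_le (dotProductBilin ℝ ℝ v).isLinear _) hy⟩

lemma maxFace_maxFace_inter_nonempty_of_perturbation {P : Set (ι → ℝ)} (hC : IsCompact C)
    (hP : IsClosed P) {u' : ι → ℝ} (h : ∀ t : ℝ, 0 < t → (maxFace (u + t • u') C ∩ P).Nonempty) :
    (maxFace u' (maxFace u C) ∩ P).Nonempty := by
  let t : ℕ → ℝ := fun k => 1 / ((k : ℝ) + 1)
  have ht : ∀ k, 0 < t k := fun k => by positivity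
  choose y hy hyP using fun k => h (t k) (ht k)
  obtain ⟨y', hy'C, φ, hφ, hlim⟩ := hC.tendsto_subseq fun k => (hy k).1
  have hF : Continuous fun p : ℝ × (ι → ℝ) => (u + p.1 • u') ⬝ᵥ p.2 :=
    (continuous_const.add (continuous_fst.smul continuous_const)).dotProduct continuous_snd
  have htφ : Filter.Tendsto (t ∘ φ) Filter.atTop (nhds 0) :=
    tendsto_one_div_add_atTop_nhds_zero_nat.comp hφ.tendsto_atTop
  have hlim' : Filter.Tendsto (fun k => (t (φ k), y (φ k))) Filter.atTop (nhds (0, y')) :=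
    htφ.prodMk_nhds hlim
  have hmax : y' ∈ maxFace u C := by
    refine ⟨hy'C, fun z hz => ?_⟩
    have hz' := (hF.tendsto _).comp (htφ.prodMk_nhds (tendsto_const_nhds (x := z)))
    have hy' := (hF.tendsto _).comp hlim'
    simpa using le_of_tendsto_of_tendsto' hz' hy' fun k => (hy (φ k)).2 z hz
  refine ⟨y', ⟨hmax, fun z hz => ?_⟩, hP.mem_of_tendsto hlim (.of_forall fun k => hyP _)⟩
  refine le_of_tendsto_of_tendsto' tendsto_const_nhds
    (((continuous_const.dotProduct continuous_id).tendsto y').comp hlim) fun k => ?_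
  show u' ⬝ᵥ z ≤ u' ⬝ᵥ y (φ k)
  have h₁ := (hy (φ k)).2 z hz.1
  have h₂ := hz.2 _ (hy (φ k)).1
  simp only [add_dotProduct, smul_dotProduct, smul_eq_mul] at h₁
  exact le_of_mul_le_mul_left (by linarith) (ht (φ k))

def lexFace : List (ι → ℝ) → Set (ι → ℝ) → Set (ι → ℝ)
  | [], C => C
  | u :: us, C => lexFace us (maxFace u C)

lemma lexFace_subset (us : List (ι → ℝ)) (C : Set (ι → ℝ)) : lexFace us C ⊆ C := by
  induction us generalizing C with
  | nil => exact subset_rfl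
  | cons u us ih => exact (ih _).trans maxFace_subset

lemma isExtreme_lexFace (us : List (ι → ℝ)) (C : Set (ι → ℝ)) : IsExtreme ℝ C (lexFace us C) := by
  induction us generalizing C with
  | nil => exact IsExtreme.refl ℝ C
  | cons u us ih => exact isExposed_maxFace.isExtreme.trans (ih _)

lemma dotProduct_eq_of_mem_lexFace {us : List (ι → ℝ)} (hu : u ∈ us)
    (hx : x ∈ lexFace us C) (hy : y ∈ lexFace us C) : u ⬝ᵥ x = u ⬝ᵥ y := by
  induction us generalizing C with
  | nil => cases hu
  | cons w us ih =>
    rcases List.mem_cons.1 hu with rfl | hu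
    · have hx' := lexFace_subset us _ hx
      have hy' := lexFace_subset us _ hy
      exact le_antisymm (hy'.2 x hx'.1) (hx'.2 y hy'.1)
    · exact ih hu hx hy

end MaxFace

variable {n : ℕ} {π : Equiv.Perm (Fin n)}

lemma isClosed_sortedCone (n : ℕ) (π : Equiv.Perm (Fin n)) : IsClosed (sortedCone n π) := by
  simp only [sortedCone, Set.ofPred_forall]
  exact isClosed_iInter fun i => isClosed_iInter fun j => isClosed_iInter fun _ =>
    isClosed_le (continuous_apply _) (continuous_apply _)

lemma add_smul_mem_sortedCone {u u' : Fin n → ℝ} {t : ℝ} (hu : u ∈ sortedCone n π)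
    (hu' : u' ∈ sortedCone n π) (ht : 0 ≤ t) : u + t • u' ∈ sortedCone n π := fun i j hij => by
  simpa using add_le_add (hu i j hij) (mul_le_mul_of_nonneg_left (hu' i j hij) ht)

def HasSortedMaximizers (π : Equiv.Perm (Fin n)) (C : Set (Fin n → ℝ)) : Prop :=
  ∀ u ∈ sortedCone n π, (maxFace u C ∩ sortedCone n π).Nonempty

lemma HasSortedMaximizers.maxFace {C : Set (Fin n → ℝ)} {u : Fin n → ℝ} (hC : IsCompact C)
    (h : HasSortedMaximizers π C) (hu : u ∈ sortedCone n π) :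
    HasSortedMaximizers π (maxFace u C) := fun _ hu' =>
  maxFace_maxFace_inter_nonempty_of_perturbation hC (isClosed_sortedCone n π) fun _ ht =>
    h _ (add_smul_mem_sortedCone hu hu' ht.le)

lemma HasSortedMaximizers.lexFace {C : Set (Fin n → ℝ)} {us : List (Fin n → ℝ)} (hC : IsCompact C)
    (h : HasSortedMaximizers π C) (hus : ∀ u ∈ us, u ∈ sortedCone n π) :
    HasSortedMaximizers π (lexFace us C) := by
  induction us generalizing C with
  | nil => exact h
  | cons u us ih =>
    exact ih (isExposed_maxFace.isCompact hC) (h.maxFace hC (hus u (List.mem_cons_self ..)))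
      fun w hw => hus w (List.mem_cons_of_mem _ hw)

def prefixIndicator (π : Equiv.Perm (Fin n)) (k : ℕ) : Fin n → ℝ :=
  fun i => if (π.symm i : ℕ) < k then 1 else 0

lemma prefixIndicator_mem_sortedCone (π : Equiv.Perm (Fin n)) (k : ℕ) :
    prefixIndicator π k ∈ sortedCone n π := fun i j hij => by
  have := Fin.le_iff_val_le_val.1 hij
  simp only [prefixIndicator, Equiv.symm_apply_apply]
  split_ifs <;> norm_num
  omega

lemma prefixIndicator_dotProduct (π : Equiv.Perm (Fin n)) (k : ℕ) (x : Fin n → ℝ) :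
    prefixIndicator π k ⬝ᵥ x = ∑ j : Fin n with j.val < k, x (π j) := by
  simp only [dotProduct, prefixIndicator, ite_mul, one_mul, zero_mul, Finset.sum_filter]
  exact (Equiv.sum_comp π fun i => if (π.symm i : ℕ) < k then x i else 0).symm.trans (by simp)

lemma prefixIndicator_succ_dotProduct (π : Equiv.Perm (Fin n)) (k : Fin n) (x : Fin n → ℝ) :
    prefixIndicator π (k + 1) ⬝ᵥ x = prefixIndicator π k ⬝ᵥ x + x (π k) := by
  have : Finset.univ.filter (fun j : Fin n => j.val < k + 1) =
      insert k (Finset.univ.filter fun j : Fin n => j.val < k) := by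
    ext j; simp [Fin.ext_iff]; omega
  rw [prefixIndicator_dotProduct, prefixIndicator_dotProduct, this, Finset.sum_insert (by simp),
    add_comm]

lemma subsingleton_lexFace_prefixIndicator (π : Equiv.Perm (Fin n)) (C : Set (Fin n → ℝ)) :
    (lexFace ((List.range (n + 1)).map (prefixIndicator π)) C).Subsingleton := by
  intro x hx y hy
  have h : ∀ k ≤ n, prefixIndicator π k ⬝ᵥ x = prefixIndicator π k ⬝ᵥ y := fun k hk =>
    dotProduct_eq_of_mem_lexFace (List.mem_map.2 ⟨k, List.mem_range.2 (by omega), rfl⟩) hx hy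
  funext i
  obtain ⟨k, rfl⟩ := π.surjective i
  have h₁ := h (k + 1) k.isLt
  rw [prefixIndicator_succ_dotProduct, prefixIndicator_succ_dotProduct, h k k.isLt.le] at h₁
  linarith

lemma standardComonotone_iff_hasSortedMaximizers {X : Set (Fin n → ℝ)} (hX : IsCompact X)
    (hne : X.Nonempty) : StandardComonotone n X ↔ ∀ π, HasSortedMaximizers π X := by
  refine ⟨fun h π u hu => ?_, fun h π v hv _ => ?_⟩
  · obtain ⟨x, hxX, hxmax, hxs⟩ := h π u hu (maxFace_nonempty hX hne)
    exact ⟨x, ⟨hxX, hxmax⟩, hxs⟩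
  · obtain ⟨x, ⟨hxX, hxmax⟩, hxs⟩ := h π v hv
    exact ⟨x, hxX, hxmax, hxs⟩

lemma hasSortedMaximizers_convexHull_iff {X : Set (Fin n → ℝ)} (hX : IsCompact X) :
    HasSortedMaximizers π (convexHull ℝ X) ↔ HasSortedMaximizers π X := by
  refine ⟨fun h v hv => ?_, fun h u hu =>
    (h u hu).mono (Set.inter_subset_inter_left _ maxFace_subset_maxFace_convexHull)⟩
  have hK : IsCompact (convexHull ℝ X) := isCompact_convexHull hX
  let us := (List.range (n + 1)).map (prefixIndicator π)
  have hus : ∀ u ∈ us, u ∈ sortedCone n π := by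
    simp only [us, List.forall_mem_map]
    exact fun k _ => prefixIndicator_mem_sortedCone π k
  obtain ⟨z, ⟨hz, -⟩, hzs⟩ :=
    (h.maxFace hK hv).lexFace (isExposed_maxFace.isCompact hK) hus 0 fun _ _ _ => le_rfl
  have hzX : z ∈ X := by
    have hF : IsExtreme ℝ (convexHull ℝ X) (lexFace us (maxFace v (convexHull ℝ X))) :=
      isExtreme_lexFace (v :: us) _
    rw [(subsingleton_lexFace_prefixIndicator π _).eq_singleton_of_mem hz] at hF
    exact extremePoints_convexHull_subset hF.mem_extremePoints
  exact ⟨z, ⟨hzX, fun y hy => (lexFace_subset us _ hz).2 y (subset_convexHull ℝ X hy)⟩, hzs⟩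

/-- A compact nonempty set is standard comonotone iff its convex hull is. -/
theorem stmt_7 (n : ℕ) (X : Set (Fin n → ℝ)) (hX : IsCompact X) (hne : X.Nonempty) :
    StandardComonotone n X ↔ StandardComonotone n (convexHull ℝ X) := by
  rw [standardComonotone_iff_hasSortedMaximizers hX hne,
    standardComonotone_iff_hasSortedMaximizers (isCompact_convexHull hX)
      (hne.mono (subset_convexHull ℝ X))]
  exact forall_congr' fun π => (hasSortedMaximizers_convexHull_iff hX).symm
end

section
/- Let X ⊆ R^n be compact, convex and nonempty. Then X is standard comonotone if and only if for every v ∈ R^n there exists a maximizer x* of v^T x over X such that v_i = v_j implies x*_i = x*_j for all indices i, j. -/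
open Finset Filter Topology

namespace Stmt8Aux

variable {n : ℕ}

noncomputable section

def dot (v x : Fin n → ℝ) : ℝ := ∑ i, v i * x i

lemma continuous_dot (v : Fin n → ℝ) : Continuous (dot v) :=
  continuous_finset_sum _ fun i _ => continuous_const.mul (continuous_apply i)

lemma dot_add_smul (w u x : Fin n → ℝ) (δ : ℝ) :
    dot (w + δ • u) x = dot w x + δ * dot u x := by
  simp only [dot, Pi.add_apply, Pi.smul_apply, smul_eq_mul, add_mul,
    Finset.sum_add_distrib, Finset.mul_sum]
  congr 1 <;> exact Finset.sum_congr rfl fun i _ => by ring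

def amax (K : Set (Fin n → ℝ)) (v : Fin n → ℝ) : Set (Fin n → ℝ) :=
  {x | x ∈ K ∧ ∀ y ∈ K, dot v y ≤ dot v x}

lemma amax_subset {K : Set (Fin n → ℝ)} {v : Fin n → ℝ} : amax K v ⊆ K := fun _ hx => hx.1

lemma amax_nonempty {K : Set (Fin n → ℝ)} (hK : IsCompact K) (hne : K.Nonempty)
    (v : Fin n → ℝ) : (amax K v).Nonempty := by
  obtain ⟨x, hx, hmax⟩ := hK.exists_isMaxOn hne (continuous_dot v).continuousOn
  exact ⟨x, hx, fun y hy => hmax hy⟩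

lemma amax_compact {K : Set (Fin n → ℝ)} (hK : IsCompact K) (v : Fin n → ℝ) :
    IsCompact (amax K v) := by
  have hcl : IsClosed (amax K v) := by
    have : amax K v = K ∩ ⋂ y ∈ K, {x | dot v y ≤ dot v x} := by
      ext x; simp [amax, Set.mem_iInter]
    rw [this]
    exact hK.isClosed.inter (isClosed_biInter fun y _ =>
      isClosed_le continuous_const (continuous_dot v))
  exact hK.of_isClosed_subset hcl amax_subset

lemma amax_convex {K : Set (Fin n → ℝ)} (hK : Convex ℝ K) (v : Fin n → ℝ) :
    Convex ℝ (amax K v) := by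
  intro x hx y hy a b ha hb hab
  refine ⟨hK hx.1 hy.1 ha hb hab, fun z hz => ?_⟩
  have hcomb : dot v (a • x + b • y) = a * dot v x + b * dot v y := by
    simp only [dot, Pi.add_apply, Pi.smul_apply, smul_eq_mul, mul_add,
      Finset.sum_add_distrib, Finset.mul_sum]
    congr 1 <;> exact Finset.sum_congr rfl fun i _ => by ring
  have h1 : a * dot v z ≤ a * dot v x := mul_le_mul_of_nonneg_left (hx.2 z hz) ha
  have h2 : b * dot v z ≤ b * dot v y := mul_le_mul_of_nonneg_left (hy.2 z hz) hb
  have : dot v z = a * dot v z + b * dot v z := by rw [← add_mul, hab, one_mul]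
  rw [hcomb, this]
  exact add_le_add h1 h2

lemma cone_closed (π : Equiv.Perm (Fin n)) : IsClosed (sortedCone n π) := by
  have : sortedCone n π = ⋂ i, ⋂ j, ⋂ (_ : i ≤ j), {x : Fin n → ℝ | x (π j) ≤ x (π i)} := by
    ext x; simp [sortedCone, Set.mem_iInter]
  rw [this]
  exact isClosed_iInter fun i => isClosed_iInter fun j => isClosed_iInter fun _ =>
    isClosed_le (continuous_apply _) (continuous_apply _)

lemma cone_add {π : Equiv.Perm (Fin n)} {u w : Fin n → ℝ} (hu : u ∈ sortedCone n π)
    (hw : w ∈ sortedCone n π) : u + w ∈ sortedCone n π :=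
  fun i j hij => add_le_add (hu i j hij) (hw i j hij)

lemma cone_smul {π : Equiv.Perm (Fin n)} {u : Fin n → ℝ} {δ : ℝ} (hδ : 0 ≤ δ)
    (hu : u ∈ sortedCone n π) : δ • u ∈ sortedCone n π := by
  intro i j hij
  simpa using mul_le_mul_of_nonneg_left (hu i j hij) hδ

lemma cone_zero (π : Equiv.Perm (Fin n)) : (0 : Fin n → ℝ) ∈ sortedCone n π :=
  fun _ _ _ => le_rfl

end
end Stmt8Aux

namespace Stmt8Aux
variable {n : ℕ}
noncomputable section

/-- `K` has, for each permutation cone containing `v`, a sorted maximizer for every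
functional in that cone. -/
def Hprop (v : Fin n → ℝ) (K : Set (Fin n → ℝ)) : Prop :=
  ∀ π : Equiv.Perm (Fin n), v ∈ sortedCone n π → ∀ u ∈ sortedCone n π,
    ∃ x, x ∈ amax K u ∧ x ∈ sortedCone n π

lemma Hprop_base {X : Set (Fin n → ℝ)} (hX : IsCompact X) (hne : X.Nonempty)
    (hc : StandardComonotone n X) (v : Fin n → ℝ) : Hprop v X := by
  intro π _ u hu
  obtain ⟨x0, hx0⟩ := amax_nonempty hX hne u
  obtain ⟨x, hxX, hmax, hcone⟩ := hc π u hu ⟨x0, hx0.1, hx0.2⟩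
  exact ⟨x, ⟨hxX, hmax⟩, hcone⟩

lemma Hprop_step {K : Set (Fin n → ℝ)} {v w : Fin n → ℝ} (hK : IsCompact K)
    (hH : Hprop v K) (hw : ∀ π : Equiv.Perm (Fin n), v ∈ sortedCone n π → w ∈ sortedCone n π) :
    Hprop v (amax K w) := by
  intro π hπ u hu
  have hwπ := hw π hπ
  have sel : ∀ k : ℕ, ∃ x, x ∈ amax K (w + (1 / ((k : ℝ) + 1)) • u) ∧ x ∈ sortedCone n π := by
    intro k
    exact hH π hπ _ (cone_add hwπ (cone_smul (by positivity) hu))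
  choose xs hxs hcone using sel
  obtain ⟨x, hxK, φ, hφ, hlim⟩ := hK.tendsto_subseq (fun k => amax_subset (hxs k))
  have hδpos : ∀ k : ℕ, (0:ℝ) < 1 / ((k : ℝ) + 1) := fun k => by positivity
  have hδ : Tendsto (fun k => (1 : ℝ) / ((φ k : ℝ) + 1)) atTop (𝓝 0) :=
    tendsto_one_div_add_atTop_nhds_zero_nat.comp hφ.tendsto_atTop
  -- basic inequality for each k and z ∈ K
  have key : ∀ k : ℕ, ∀ z ∈ K,
      dot w z + (1 / ((k : ℝ) + 1)) * dot u z ≤ dot w (xs k) + (1 / ((k : ℝ) + 1)) * dot u (xs k) := by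
    intro k z hz
    have := (hxs k).2 z hz
    rwa [dot_add_smul, dot_add_smul] at this
  -- u-maximality over amax K w, for each k
  have key2 : ∀ k, ∀ y ∈ amax K w, dot u y ≤ dot u (xs k) := by
    intro k y hy
    have h1 : dot w (xs k) ≤ dot w y := hy.2 (xs k) (amax_subset (hxs k))
    have h2 := key k y hy.1
    have h3 : (1 / ((k : ℝ) + 1)) * dot u y ≤ (1 / ((k : ℝ) + 1)) * dot u (xs k) := by linarith
    exact le_of_mul_le_mul_left h3 (hδpos k)
  have hcont : ∀ c : Fin n → ℝ, Tendsto (fun k => dot c (xs (φ k))) atTop (𝓝 (dot c x)) :=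
    fun c => ((continuous_dot c).tendsto x).comp hlim
  have hxmemw : x ∈ amax K w := by
    refine ⟨hxK, fun z hz => ?_⟩
    have hA : Tendsto (fun k => dot w z + (1 / ((φ k : ℝ) + 1)) * dot u z) atTop
        (𝓝 (dot w z + 0 * dot u z)) := tendsto_const_nhds.add (hδ.mul tendsto_const_nhds)
    have hB : Tendsto (fun k => dot w (xs (φ k)) + (1 / ((φ k : ℝ) + 1)) * dot u (xs (φ k)))
        atTop (𝓝 (dot w x + 0 * dot u x)) := (hcont w).add (hδ.mul (hcont u))
    have := le_of_tendsto_of_tendsto' hA hB (fun k => key (φ k) z hz)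
    simpa using this
  refine ⟨x, ⟨hxmemw, fun y hy => ?_⟩, ?_⟩
  · exact le_of_tendsto_of_tendsto' tendsto_const_nhds (hcont u) (fun k => key2 (φ k) y hy)
  · exact (cone_closed π).mem_of_tendsto hlim (Filter.Eventually.of_forall fun k => hcone (φ k))

lemma chain_lemma {v : Fin n → ℝ} :
    ∀ (L : List (Fin n → ℝ)) (K : Set (Fin n → ℝ)), IsCompact K → Convex ℝ K → K.Nonempty →
    Hprop v K →
    (∀ w ∈ L, ∀ π : Equiv.Perm (Fin n), v ∈ sortedCone n π → w ∈ sortedCone n π) →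
    IsCompact (L.foldl amax K) ∧ Convex ℝ (L.foldl amax K) ∧ (L.foldl amax K).Nonempty ∧
      Hprop v (L.foldl amax K) ∧ (L.foldl amax K) ⊆ K ∧
      ∀ w ∈ L, ∀ x ∈ L.foldl amax K, ∀ y ∈ L.foldl amax K, dot w x = dot w y
  | [], K, hcpt, hcv, hne, hH, _ => ⟨hcpt, hcv, hne, hH, subset_rfl, by simp⟩
  | w :: L, K, hcpt, hcv, hne, hH, hL => by
    have IH := chain_lemma L (amax K w) (amax_compact hcpt w) (amax_convex hcv w)
      (amax_nonempty hcpt hne w) (Hprop_step hcpt hH (hL w (by simp)))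
      (fun u hu => hL u (by simp [hu]))
    simp only [List.foldl_cons]
    obtain ⟨h1, h2, h3, h4, h5, h6⟩ := IH
    refine ⟨h1, h2, h3, h4, h5.trans amax_subset, ?_⟩
    intro u hu x hx y hy
    rcases List.mem_cons.mp hu with h | h
    · subst h
      have hx' := h5 hx
      have hy' := h5 hy
      exact le_antisymm (hy'.2 x hx'.1) (hx'.2 y hy'.1)
    · exact h6 u h x hx y hy

end
end Stmt8Aux

namespace Stmt8Aux
variable {n : ℕ}
noncomputable section

lemma double_sum (s : Finset (Fin n)) (f g : Fin n → ℝ) :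
    ∑ b ∈ s, ∑ c ∈ s, (f b - f c) * (g b - g c) =
      2 * ((s.card : ℝ) * ∑ b ∈ s, f b * g b) - 2 * (∑ b ∈ s, f b) * (∑ b ∈ s, g b) := by
  have step : ∀ b, ∑ c ∈ s, (f b - f c) * (g b - g c) =
      (s.card : ℝ) * (f b * g b) - f b * (∑ c ∈ s, g c) - (∑ c ∈ s, f c) * g b
        + ∑ c ∈ s, f c * g c := by
    intro b
    rw [Finset.sum_congr rfl (fun c _ => (by ring :
      (f b - f c) * (g b - g c) = f b * g b - f b * g c - f c * g b + f c * g c))]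
    simp only [Finset.sum_add_distrib, Finset.sum_sub_distrib, Finset.sum_const,
      nsmul_eq_mul, ← Finset.mul_sum, ← Finset.sum_mul]
  rw [Finset.sum_congr rfl (fun b _ => step b)]
  simp only [Finset.sum_add_distrib, Finset.sum_sub_distrib, Finset.sum_const,
    nsmul_eq_mul, ← Finset.mul_sum, ← Finset.sum_mul]
  ring

lemma reverse_dir (X : Set (Fin n → ℝ))
    (hR : ∀ v : Fin n → ℝ, ∃ xs ∈ X, (∀ y ∈ X, dot v y ≤ dot v xs) ∧
      ∀ i j : Fin n, v i = v j → xs i = xs j) :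
    StandardComonotone n X := by
  intro π v hπ _
  obtain ⟨xs, hxsX, hmax, heq⟩ := hR v
  refine ⟨xs, hxsX, hmax, ?_⟩
  intro i j hij
  by_cases hv : v (π i) = v (π j)
  · exact (heq _ _ hv).ge
  · set a := π i with ha
    set b := π j with hb
    have hlt : v b < v a := lt_of_le_of_ne (hπ i j hij) (fun h => hv h.symm)
    set δ : ℝ := (v a - v b) / 2 with hδdef
    have hδpos : 0 < δ := by simp only [hδdef]; linarith
    have hab : a ≠ b := fun h => hv (congrArg v h)
    set v' : Fin n → ℝ := fun c => v c - (if c = a then δ else 0) + (if c = b then δ else 0)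
      with hv'
    obtain ⟨p, hpX, hpmax, hpeq⟩ := hR v'
    have hv'ab : v' a = v' b := by
      show (v a - if a = a then δ else 0) + (if a = b then δ else 0) =
        (v b - if b = a then δ else 0) + (if b = b then δ else 0)
      rw [if_pos rfl, if_pos rfl, if_neg hab, if_neg (Ne.symm hab), hδdef]
      ring
    have hpe : p a = p b := hpeq a b hv'ab
    have key : ∀ z : Fin n → ℝ, dot v' z = dot v z - δ * z a + δ * z b := by
      intro z
      simp only [dot, hv', sub_mul, add_mul, Finset.sum_add_distrib, Finset.sum_sub_distrib]
      congr 1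
      · congr 1
        rw [Finset.sum_congr rfl (fun c _ => (by split_ifs with h <;> simp [h] :
          (if c = a then δ else 0) * z c = if c = a then δ * z a else 0))]
        simp
      · rw [Finset.sum_congr rfl (fun c _ => (by split_ifs with h <;> simp [h] :
          (if c = b then δ else 0) * z c = if c = b then δ * z b else 0))]
        simp
    have h1 : dot v p ≤ dot v xs := hmax p hpX
    have h2 : dot v' xs ≤ dot v' p := hpmax xs hxsX
    rw [key, key] at h2
    by_contra hcon
    push_neg at hcon
    have : 0 < δ * (xs b - xs a) := mul_pos hδpos (by linarith)
    rw [hpe] at h2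
    linarith

end
end Stmt8Aux

namespace Stmt8Aux
variable {n : ℕ}
noncomputable section

lemma forward_dir (X : Set (Fin n → ℝ)) (hX : IsCompact X) (hconv : Convex ℝ X)
    (hne : X.Nonempty) (hc : StandardComonotone n X) (v : Fin n → ℝ) :
    ∃ xs ∈ X, (∀ y ∈ X, dot v y ≤ dot v xs) ∧ ∀ i j : Fin n, v i = v j → xs i = xs j := by
  classical
  set sUp : Fin n → (Fin n → ℝ) := fun a b => if v a ≤ v b then 1 else 0 with hsUp
  set sStr : Fin n → (Fin n → ℝ) := fun a b => if v a < v b then 1 else 0 with hsStr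
  have hconeUp : ∀ a : Fin n, ∀ π : Equiv.Perm (Fin n), v ∈ sortedCone n π →
      sUp a ∈ sortedCone n π := by
    intro a π hπ i j hij
    have hvv := hπ i j hij
    show (if v a ≤ v (π j) then (1:ℝ) else 0) ≤ (if v a ≤ v (π i) then 1 else 0)
    split_ifs with h1 h2
    · exact le_rfl
    · exact absurd (h1.trans hvv) h2
    · norm_num
    · exact le_rfl
  have hconeStr : ∀ a : Fin n, ∀ π : Equiv.Perm (Fin n), v ∈ sortedCone n π →
      sStr a ∈ sortedCone n π := by
    intro a π hπ i j hij
    have hvv := hπ i j hij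
    show (if v a < v (π j) then (1:ℝ) else 0) ≤ (if v a < v (π i) then 1 else 0)
    split_ifs with h1 h2
    · exact le_rfl
    · exact absurd (h1.trans_le hvv) h2
    · norm_num
    · exact le_rfl
  have hH0 : Hprop v X := Hprop_base hX hne hc v
  have hK1c : IsCompact (amax X v) := amax_compact hX v
  have hK1cv : Convex ℝ (amax X v) := amax_convex hconv v
  have hK1ne : (amax X v).Nonempty := amax_nonempty hX hne v
  have hH1 : Hprop v (amax X v) := Hprop_step hX hH0 (fun _ hπ => hπ)
  set L : List (Fin n → ℝ) := (List.finRange n).map sUp ++ (List.finRange n).map sStr with hLdef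
  have hLmem : ∀ w ∈ L, ∀ π : Equiv.Perm (Fin n), v ∈ sortedCone n π → w ∈ sortedCone n π := by
    intro w hw π hπ
    rcases List.mem_append.mp hw with h | h
    · obtain ⟨a, _, rfl⟩ := List.mem_map.mp h
      exact hconeUp a π hπ
    · obtain ⟨a, _, rfl⟩ := List.mem_map.mp h
      exact hconeStr a π hπ
  obtain ⟨hKc, hKcv, hKne, hKH, hKsub, hKfix⟩ :=
    chain_lemma L (amax X v) hK1c hK1cv hK1ne hH1 hLmem
  set Kst := L.foldl amax (amax X v) with hKstdef
  have hfcont : Continuous (fun x : Fin n → ℝ => ∑ i, x i * x i) :=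
    continuous_finset_sum _ fun i _ => (continuous_apply i).mul (continuous_apply i)
  obtain ⟨xst, hxst, hmin⟩ := hKc.exists_isMinOn hKne hfcont.continuousOn
  -- the big constant
  set C : ℝ := 1 + ∑ a, ∑ b, (if v b < v a then max 0 ((xst a - xst b) / (v a - v b)) else 0)
    with hCdef
  have hterm_nonneg : ∀ a b : Fin n,
      0 ≤ (if v b < v a then max 0 ((xst a - xst b) / (v a - v b)) else 0) := by
    intro a b; split_ifs
    · exact le_max_left 0 _
    · exact le_rfl
  have hCkey : ∀ a b : Fin n, v b < v a → xst a - xst b < C * (v a - v b) := by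
    intro a b hab
    have t1 : (if v b < v a then max 0 ((xst a - xst b) / (v a - v b)) else 0) ≤
        ∑ b', (if v b' < v a then max 0 ((xst a - xst b') / (v a - v b')) else 0) :=
      Finset.single_le_sum (fun b' _ => hterm_nonneg a b') (Finset.mem_univ b)
    have t2 : ∑ b', (if v b' < v a then max 0 ((xst a - xst b') / (v a - v b')) else 0) ≤
        ∑ a', ∑ b', (if v b' < v a' then max 0 ((xst a' - xst b') / (v a' - v b')) else 0) :=
      Finset.single_le_sum (fun a' _ => Finset.sum_nonneg fun b' _ => hterm_nonneg a' b')
        (Finset.mem_univ a)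
    have ht : (if v b < v a then max 0 ((xst a - xst b) / (v a - v b)) else 0)
        = max 0 ((xst a - xst b) / (v a - v b)) := if_pos hab
    have h0 : (xst a - xst b) / (v a - v b) ≤ max 0 ((xst a - xst b) / (v a - v b)) :=
      le_max_right _ _
    have hratio : (xst a - xst b) / (v a - v b) < C := by
      rw [hCdef]; rw [ht] at t1; linarith
    have hpos : (0:ℝ) < v a - v b := by linarith
    calc xst a - xst b = ((xst a - xst b) / (v a - v b)) * (v a - v b) := by field_simp
      _ < C * (v a - v b) := mul_lt_mul_of_pos_right hratio hpos
  -- the sorting permutation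
  set g : Fin n → ℝ := fun i => xst i - C * v i with hgdef
  set πr := Tuple.sort g with hπrdef
  have hmono : Monotone (g ∘ πr) := Tuple.monotone_sort g
  have hmono' : ∀ i j : Fin n, i ≤ j → xst (πr i) - C * v (πr i) ≤ xst (πr j) - C * v (πr j) :=
    fun i j hij => hmono hij
  have hvπ : v ∈ sortedCone n πr := by
    intro i j hij
    by_contra hcon
    push_neg at hcon
    have h1 := hCkey (πr j) (πr i) hcon
    have h2 := hmono' i j hij
    nlinarith
  have hfib : ∀ i j : Fin n, i ≤ j → v (πr i) = v (πr j) → xst (πr i) ≤ xst (πr j) := by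
    intro i j hij he
    have h2 := hmono' i j hij
    rw [he] at h2; linarith
  -- the comparison point r
  obtain ⟨r, hrmem, hrcone⟩ := hKH πr hvπ 0 (cone_zero πr)
  have hrK : r ∈ Kst := hrmem.1
  -- fiber sums agree
  have hLUp : ∀ a : Fin n, sUp a ∈ L := fun a =>
    List.mem_append.mpr (Or.inl (List.mem_map.mpr ⟨a, List.mem_finRange a, rfl⟩))
  have hLStr : ∀ a : Fin n, sStr a ∈ L := fun a =>
    List.mem_append.mpr (Or.inr (List.mem_map.mpr ⟨a, List.mem_finRange a, rfl⟩))
  have hfibsum : ∀ a : Fin n,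
      ∑ b ∈ Finset.univ.filter (fun b => v b = v a), r b
        = ∑ b ∈ Finset.univ.filter (fun b => v b = v a), xst b := by
    intro a
    have h1 : dot (sUp a) r = dot (sUp a) xst := hKfix _ (hLUp a) r hrK xst hxst
    have h2 : dot (sStr a) r = dot (sStr a) xst := hKfix _ (hLStr a) r hrK xst hxst
    have key : ∀ z : Fin n → ℝ, ∑ b ∈ Finset.univ.filter (fun b => v b = v a), z b
        = dot (sUp a) z - dot (sStr a) z := by
      intro z
      rw [Finset.sum_filter]
      show _ = (∑ b, sUp a b * z b) - ∑ b, sStr a b * z b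
      rw [← Finset.sum_sub_distrib]
      apply Finset.sum_congr rfl
      intro b _
      show (if v b = v a then z b else 0)
        = (if v a ≤ v b then (1:ℝ) else 0) * z b - (if v a < v b then (1:ℝ) else 0) * z b
      rcases lt_trichotomy (v a) (v b) with h | h | h
      · rw [if_neg (by exact fun he => absurd he.symm h.ne), if_pos h.le, if_pos h]; ring
      · rw [if_pos h.symm, if_pos h.le, if_neg (by rw [h]; exact lt_irrefl _)]; ring
      · rw [if_neg h.ne, if_neg (not_le.mpr h), if_neg (asymm h)]; ring
    rw [key, key, h1, h2]
  -- pairwise opposite ordering on fibers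
  have hanti : ∀ b c : Fin n, v b = v c → (xst b - xst c) * (r b - r c) ≤ 0 := by
    intro b c hbc
    have hb : πr (πr.symm b) = b := Equiv.apply_symm_apply _ _
    have hc' : πr (πr.symm c) = c := Equiv.apply_symm_apply _ _
    rcases le_total (πr.symm b) (πr.symm c) with hij | hij
    · have h1 := hrcone _ _ hij
      rw [hb, hc'] at h1
      have h2 := hfib _ _ hij (by rw [hb, hc']; exact hbc)
      rw [hb, hc'] at h2
      nlinarith
    · have h1 := hrcone _ _ hij
      rw [hb, hc'] at h1
      have h2 := hfib _ _ hij (by rw [hb, hc']; exact hbc.symm)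
      rw [hb, hc'] at h2
      nlinarith
  -- variational inequality
  have hVI : ∑ i, xst i * xst i ≤ ∑ i, xst i * r i := by
    by_contra hcon
    push_neg at hcon
    set d : ℝ := ∑ i, xst i * r i - ∑ i, xst i * xst i with hd
    have hdneg : d < 0 := by rw [hd]; linarith
    set c : ℝ := ∑ i, (r i - xst i) * (r i - xst i) with hcc
    have hc0 : 0 ≤ c := Finset.sum_nonneg fun i _ => mul_self_nonneg _
    set t : ℝ := min 1 ((-d) / (c + 1)) with htdef
    have htpos : 0 < t := lt_min one_pos (div_pos (by linarith) (by linarith))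
    have htle1 : t ≤ 1 := min_le_left _ _
    have htc : t * c ≤ -d := by
      have h1 : t ≤ (-d) / (c + 1) := min_le_right _ _
      have h2 : t * c ≤ ((-d) / (c + 1)) * c := mul_le_mul_of_nonneg_right h1 hc0
      have h3 : ((-d) / (c + 1)) * c ≤ -d := by
        rw [div_mul_eq_mul_div, div_le_iff₀ (by linarith : (0:ℝ) < c + 1)]
        nlinarith
      linarith
    have hzmem : ((1 - t) • xst + t • r) ∈ Kst :=
      hKcv hxst hrK (by linarith) htpos.le (by ring)
    have hmz : ∑ i, xst i * xst i ≤
        ∑ i, ((1 - t) • xst + t • r) i * ((1 - t) • xst + t • r) i :=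
      isMinOn_iff.mp hmin _ hzmem
    have hexp : ∑ i, ((1 - t) • xst + t • r) i * ((1 - t) • xst + t • r) i
        = ∑ i, xst i * xst i + (2 * t) * d + t ^ 2 * c := by
      rw [hd, hcc]
      simp only [Pi.add_apply, Pi.smul_apply, smul_eq_mul]
      rw [Finset.sum_congr rfl (fun i _ => (by ring :
        ((1 - t) * xst i + t * r i) * ((1 - t) * xst i + t * r i)
          = xst i * xst i + (2 * t) * (xst i * r i - xst i * xst i)
            + t ^ 2 * ((r i - xst i) * (r i - xst i))))]
      rw [Finset.sum_add_distrib, Finset.sum_add_distrib, ← Finset.mul_sum, ← Finset.mul_sum,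
        Finset.sum_sub_distrib]
    rw [hexp] at hmz
    have h4 : 0 ≤ 2 * t * d + t ^ 2 * c := by linarith
    have h5 : 0 ≤ 2 * d + t * c := by
      by_contra h6
      push_neg at h6
      have : t * (2 * d + t * c) < 0 := mul_neg_of_pos_of_neg htpos h6
      nlinarith
    linarith
  -- fiberwise bookkeeping
  have hpart : ∀ F : Fin n → ℝ,
      ∑ t ∈ Finset.univ.image v, ∑ b ∈ Finset.univ.filter (fun b => v b = t), F b
        = ∑ b, F b := fun F =>
    Finset.sum_fiberwise_of_maps_to (fun b _ => Finset.mem_image_of_mem v (Finset.mem_univ b)) F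
  have hRtSt : ∀ t ∈ Finset.univ.image v,
      ∑ b ∈ Finset.univ.filter (fun b => v b = t), r b
        = ∑ b ∈ Finset.univ.filter (fun b => v b = t), xst b := by
    intro t ht
    obtain ⟨a, _, rfl⟩ := Finset.mem_image.mp ht
    exact hfibsum a
  have hcardpos : ∀ t ∈ Finset.univ.image v,
      (0:ℝ) < ((Finset.univ.filter (fun b => v b = t)).card : ℝ) := by
    intro t ht
    obtain ⟨a, _, rfl⟩ := Finset.mem_image.mp ht
    have : a ∈ Finset.univ.filter (fun b => v b = v a) :=
      Finset.mem_filter.mpr ⟨Finset.mem_univ a, rfl⟩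
    exact_mod_cast Nat.cast_pos.mpr (Finset.card_pos.mpr ⟨a, this⟩)
  have h3all : ∀ t : ℝ, ∑ b ∈ Finset.univ.filter (fun b => v b = t),
      ∑ c ∈ Finset.univ.filter (fun b => v b = t), (xst b - xst c) * (r b - r c) ≤ 0 := by
    intro t
    apply Finset.sum_nonpos
    intro b hb
    apply Finset.sum_nonpos
    intro c hc
    exact hanti b c ((Finset.mem_filter.mp hb).2.trans (Finset.mem_filter.mp hc).2.symm)
  have h4all : ∀ t : ℝ, 0 ≤ ∑ b ∈ Finset.univ.filter (fun b => v b = t),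
      ∑ c ∈ Finset.univ.filter (fun b => v b = t), (xst b - xst c) * (xst b - xst c) := by
    intro t
    exact Finset.sum_nonneg fun b _ => Finset.sum_nonneg fun c _ => mul_self_nonneg _
  have hBtAt : ∀ t ∈ Finset.univ.image v,
      ∑ b ∈ Finset.univ.filter (fun b => v b = t), xst b * r b
        ≤ ∑ b ∈ Finset.univ.filter (fun b => v b = t), xst b * xst b := by
    intro t ht
    have h3 := h3all t
    have h4 := h4all t
    rw [double_sum] at h3 h4
    rw [hRtSt t ht] at h3
    have hcard := hcardpos t ht
    have hmul : ((Finset.univ.filter (fun b => v b = t)).card : ℝ)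
          * (∑ b ∈ Finset.univ.filter (fun b => v b = t), xst b * r b)
        ≤ ((Finset.univ.filter (fun b => v b = t)).card : ℝ)
          * ∑ b ∈ Finset.univ.filter (fun b => v b = t), xst b * xst b := by nlinarith
    exact le_of_mul_le_mul_left hmul hcard
  have hAB : ∀ t ∈ Finset.univ.image v,
      ∑ b ∈ Finset.univ.filter (fun b => v b = t), xst b * r b
        = ∑ b ∈ Finset.univ.filter (fun b => v b = t), xst b * xst b := by
    have hle1 : ∑ t ∈ Finset.univ.image v, ∑ b ∈ Finset.univ.filter (fun b => v b = t),
        xst b * r b ≤ ∑ t ∈ Finset.univ.image v, ∑ b ∈ Finset.univ.filter (fun b => v b = t),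
        xst b * xst b := Finset.sum_le_sum hBtAt
    have hle2 : ∑ t ∈ Finset.univ.image v, ∑ b ∈ Finset.univ.filter (fun b => v b = t),
        xst b * xst b ≤ ∑ t ∈ Finset.univ.image v, ∑ b ∈ Finset.univ.filter (fun b => v b = t),
        xst b * r b := by
      rw [hpart (fun b => xst b * xst b), hpart (fun b => xst b * r b)]
      exact hVI
    exact (Finset.sum_eq_sum_iff_of_le hBtAt).mp (le_antisymm hle1 hle2)
  -- conclusion
  have hK1mem := hKsub hxst
  refine ⟨xst, hK1mem.1, hK1mem.2, ?_⟩
  intro i j hvij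
  have ht0 : v i ∈ Finset.univ.image v := Finset.mem_image_of_mem v (Finset.mem_univ i)
  have hiC : i ∈ Finset.univ.filter (fun b => v b = v i) :=
    Finset.mem_filter.mpr ⟨Finset.mem_univ i, rfl⟩
  have hjC : j ∈ Finset.univ.filter (fun b => v b = v i) :=
    Finset.mem_filter.mpr ⟨Finset.mem_univ j, hvij.symm⟩
  have h3 := h3all (v i)
  have h4 := h4all (v i)
  rw [double_sum] at h3 h4
  rw [hRtSt (v i) ht0] at h3
  have hABi := hAB (v i) ht0
  have hzero : ∑ b ∈ Finset.univ.filter (fun b => v b = v i),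
      ∑ c ∈ Finset.univ.filter (fun b => v b = v i), (xst b - xst c) * (xst b - xst c) = 0 := by
    rw [double_sum]
    nlinarith
  have hinner := (Finset.sum_eq_zero_iff_of_nonneg
    (fun b _ => Finset.sum_nonneg fun c _ => mul_self_nonneg _)).mp hzero i hiC
  have hterm := (Finset.sum_eq_zero_iff_of_nonneg
    (fun c _ => mul_self_nonneg _)).mp hinner j hjC
  exact sub_eq_zero.mp (mul_self_eq_zero.mp hterm)

end
end Stmt8Aux

/-- A compact convex nonempty set is standard comonotone iff for every cost vector `v`
there is a maximizer `x*` of `vᵀx` over `X` with `vᵢ = vⱼ ⟹ x*ᵢ = x*ⱼ`. -/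
theorem stmt_8 (n : ℕ) (X : Set (Fin n → ℝ)) (hX : IsCompact X) (hconv : Convex ℝ X)
    (hne : X.Nonempty) :
    StandardComonotone n X ↔
      ∀ v : Fin n → ℝ,
        ∃ xs ∈ X, (∀ y ∈ X, ∑ i, v i * y i ≤ ∑ i, v i * xs i) ∧
          ∀ i j : Fin n, v i = v j → xs i = xs j := by
  constructor
  · intro hc v
    exact Stmt8Aux.forward_dir X hX hconv hne hc v
  · intro hR
    exact Stmt8Aux.reverse_dir X hR
end

section
/- Let Q ∈ R^{n×n} be symmetric positive definite and X = {x ∈ R^n : x^T Q x ≤ 1}. If X is standard comonotone, then Q^{-1} (equivalently Q) has all diagonal entries equal and all off-diagonal entries equal; consequently X is permutation-invariant. -/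
open Matrix

namespace Matrix

variable {ι R : Type*}

lemma IsSymm.dotProduct_mulVec_comm [Fintype ι] [CommSemiring R] {Q : Matrix ι ι R}
    (hQ : Q.IsSymm) (x y : ι → R) : x ⬝ᵥ Q *ᵥ y = y ⬝ᵥ Q *ᵥ x := by
  rw [dotProduct_mulVec, ← mulVec_transpose, hQ.eq, dotProduct_comm]

lemma IsSymm.dotProduct_mulVec_sub_sub [Fintype ι] [CommRing R] {Q : Matrix ι ι R}
    (hQ : Q.IsSymm) (x y : ι → R) :
    (y - x) ⬝ᵥ Q *ᵥ (y - x) = y ⬝ᵥ Q *ᵥ y - 2 * (y ⬝ᵥ Q *ᵥ x) + x ⬝ᵥ Q *ᵥ x := by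
  rw [mulVec_sub, dotProduct_sub, sub_dotProduct, sub_dotProduct, hQ.dotProduct_mulVec_comm x y]
  ring

lemma submatrix_equiv_eq_self_of_apply_eq {A : Matrix ι ι R} (hdiag : ∀ i j, A i i = A j j)
    (hoff : ∀ i j k l, i ≠ j → k ≠ l → A i j = A k l) (σ : ι ≃ ι) : A.submatrix σ σ = A := by
  ext i j
  rcases eq_or_ne i j with rfl | hij
  · exact hdiag (σ i) i
  · exact hoff (σ i) (σ j) i j (σ.injective.ne hij) hij

lemma dotProduct_mulVec_comp_equiv [Fintype ι] [NonUnitalCommSemiring R] {Q : Matrix ι ι R}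
    {σ : ι ≃ ι} (hQ : Q.submatrix σ σ = Q) (x : ι → R) :
    (x ∘ σ) ⬝ᵥ Q *ᵥ (x ∘ σ) = x ⬝ᵥ Q *ᵥ x := by
  conv_lhs => rw [← hQ]
  rw [submatrix_mulVec_equiv, Function.comp_assoc, σ.self_comp_symm, Function.comp_id,
    comp_equiv_dotProduct_comp_equiv]

section InvariantUnderTransposition

variable [Fintype ι] [DecidableEq ι] [CommRing R] {A : Matrix ι ι R}

lemma apply_eq_apply_of_ne
    (hA : ∀ (v : ι → R) (i j : ι), v i = v j → (A *ᵥ v) i = (A *ᵥ v) j) {i j k : ι}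
    (hik : i ≠ k) (hjk : j ≠ k) : A i k = A j k := by
  simpa [mulVec_single_one] using
    hA (Pi.single k 1) i j (by rw [Pi.single_eq_of_ne hik, Pi.single_eq_of_ne hjk])

lemma diag_eq_of_isSymm
    (hA : ∀ (v : ι → R) (i j : ι), v i = v j → (A *ᵥ v) i = (A *ᵥ v) j)
    (hsymm : A.IsSymm) (i j : ι) : A i i = A j j := by
  rcases eq_or_ne i j with rfl | hij
  · rfl
  have h := hA (Pi.single i 1 + Pi.single j 1) i j (by simp [hij, hij.symm])
  simp only [mulVec_add, mulVec_single_one, Pi.add_apply, col_apply] at h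
  linear_combination h + hsymm.apply i j

lemma offDiag_eq_of_isSymm
    (hA : ∀ (v : ι → R) (i j : ι), v i = v j → (A *ᵥ v) i = (A *ᵥ v) j) (hsymm : A.IsSymm)
    {i j k l : ι} (hij : i ≠ j) (hkl : k ≠ l) :
    A i j = A k l := by
  rcases eq_or_ne j l with rfl | hjl
  · exact apply_eq_apply_of_ne hA hij hkl
  calc A i j = A l j := apply_eq_apply_of_ne hA hij hjl.symm
    _ = A j l := hsymm.apply j l
    _ = A k l := apply_eq_apply_of_ne hA hjl hkl

end InvariantUnderTransposition

end Matrix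

section Ellipsoid

variable {ι : Type*} [Fintype ι] {Q : Matrix ι ι ℝ}

def ellipsoid (Q : Matrix ι ι ℝ) : Set (ι → ℝ) := {x | x ⬝ᵥ Q *ᵥ x ≤ 1}

lemma Matrix.PosSemidef.dotProduct_mulVec_le_one (hQ : Q.PosSemidef) {x y : ι → ℝ}
    (hx : x ⬝ᵥ Q *ᵥ x = 1) (hy : y ∈ ellipsoid Q) : y ⬝ᵥ Q *ᵥ x ≤ 1 := by
  have h := hQ.dotProduct_mulVec_nonneg (y - x)
  rw [star_trivial, (isHermitian_iff_isSymm.mp hQ.isHermitian).dotProduct_mulVec_sub_sub] at h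
  have hy' : y ⬝ᵥ Q *ᵥ y ≤ 1 := hy
  linarith

namespace Matrix.PosDef

lemma eq_of_dotProduct_mulVec_eq_one (hQ : Q.PosDef) {x y : ι → ℝ} (hx : x ⬝ᵥ Q *ᵥ x = 1)
    (hy : y ∈ ellipsoid Q) (hxy : y ⬝ᵥ Q *ᵥ x = 1) : y = x := by
  by_contra hne
  have h := hQ.dotProduct_mulVec_pos (sub_ne_zero.mpr hne)
  rw [star_trivial, (isHermitian_iff_isSymm.mp hQ.isHermitian).dotProduct_mulVec_sub_sub] at h
  have hy' : y ⬝ᵥ Q *ᵥ y ≤ 1 := hy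
  linarith

lemma exists_pos_maximizer_ellipsoid_iff_eq_smul [DecidableEq ι] (hQ : Q.PosDef) {v : ι → ℝ}
    (hv : v ≠ 0) :
    ∃ c : ℝ, 0 < c ∧ c • Q⁻¹ *ᵥ v ∈ ellipsoid Q ∧ ∀ x ∈ ellipsoid Q,
      ((∀ y ∈ ellipsoid Q, v ⬝ᵥ y ≤ v ⬝ᵥ x) ↔ x = c • Q⁻¹ *ᵥ v) := by
  set w := Q⁻¹ *ᵥ v
  have hQw : Q *ᵥ w = v := by
    rw [mulVec_mulVec, mul_nonsing_inv _ ((isUnit_iff_isUnit_det Q).mp hQ.isUnit), one_mulVec]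
  have hw : w ≠ 0 := fun h => hv (by rw [← hQw, h, mulVec_zero])
  set a := w ⬝ᵥ Q *ᵥ w
  have ha : 0 < a := by simpa using hQ.dotProduct_mulVec_pos hw
  have hsqrt : 0 < √a := Real.sqrt_pos.mpr ha
  set x₀ := (√a)⁻¹ • w
  have hx₀ : x₀ ⬝ᵥ Q *ᵥ x₀ = 1 := by
    simp only [x₀, mulVec_smul, dotProduct_smul, smul_dotProduct, smul_eq_mul]
    field_simp
    exact (Real.sq_sqrt ha.le).symm
  have hx₀_mem : x₀ ∈ ellipsoid Q := hx₀.le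
  have hv_eq : ∀ y, v ⬝ᵥ y = √a * (y ⬝ᵥ Q *ᵥ x₀) := by
    intro y
    rw [mulVec_smul, dotProduct_smul, hQw, smul_eq_mul, dotProduct_comm, ← mul_assoc,
      mul_inv_cancel₀ hsqrt.ne', one_mul]
  refine ⟨(√a)⁻¹, by positivity, hx₀_mem, fun x hx => ⟨fun hmax => ?_, ?_⟩⟩
  · refine hQ.eq_of_dotProduct_mulVec_eq_one hx₀ hx
      (le_antisymm (hQ.posSemidef.dotProduct_mulVec_le_one hx₀ hx) ?_)
    have h := hmax x₀ hx₀_mem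
    rw [hv_eq, hv_eq, hx₀] at h
    exact le_of_mul_le_mul_left (by linarith) hsqrt
  · rintro rfl y hy
    rw [hv_eq, hv_eq, hx₀]
    exact mul_le_mul_of_nonneg_left (hQ.posSemidef.dotProduct_mulVec_le_one hx₀ hy) hsqrt.le

end Matrix.PosDef

end Ellipsoid

section SortedCone

variable {n : ℕ}

lemma exists_mem_sortedCone (v : Fin n → ℝ) : ∃ π, v ∈ sortedCone n π :=
  ⟨Tuple.sort (-v), fun _ _ hij => by simpa using Tuple.monotone_sort (-v) hij⟩

lemma mem_sortedCone_swap_mul {v : Fin n → ℝ} {i j : Fin n} (hv : v i = v j)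
    {π : Equiv.Perm (Fin n)} (hπ : v ∈ sortedCone n π) :
    v ∈ sortedCone n (Equiv.swap i j * π) := by
  have hswap : ∀ k, v (Equiv.swap i j k) = v k := by
    intro k
    rw [Equiv.swap_apply_def]
    split_ifs <;> simp_all
  intro a b hab
  simpa only [Equiv.Perm.mul_apply, hswap] using hπ a b hab

lemma apply_eq_of_mem_sortedCone_of_mem_swap_mul {x : Fin n → ℝ} {i j : Fin n}
    {π : Equiv.Perm (Fin n)} (h : x ∈ sortedCone n π)
    (hswap : x ∈ sortedCone n (Equiv.swap i j * π)) : x i = x j := by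
  obtain ⟨a, rfl⟩ := π.surjective i
  obtain ⟨b, rfl⟩ := π.surjective j
  rcases le_total a b with hab | hba
  · have hs := hswap a b hab
    simp only [Equiv.Perm.mul_apply, Equiv.swap_apply_left, Equiv.swap_apply_right] at hs
    exact le_antisymm hs (h a b hab)
  · have hs := hswap b a hba
    simp only [Equiv.Perm.mul_apply, Equiv.swap_apply_left, Equiv.swap_apply_right] at hs
    exact le_antisymm (h b a hba) hs

end SortedCone

lemma StandardComonotone.inv_mulVec_apply_eq {n : ℕ} {Q : Matrix (Fin n) (Fin n) ℝ}
    (hQ : Q.PosDef) (hco : StandardComonotone n (ellipsoid Q)) {v : Fin n → ℝ} {i j : Fin n}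
    (hv : v i = v j) : (Q⁻¹ *ᵥ v) i = (Q⁻¹ *ᵥ v) j := by
  rcases eq_or_ne v 0 with rfl | hv0
  · simp
  obtain ⟨c, hc, hmem, hmax_iff⟩ := hQ.exists_pos_maximizer_ellipsoid_iff_eq_smul hv0
  have hsorted : ∀ π, v ∈ sortedCone n π → c • Q⁻¹ *ᵥ v ∈ sortedCone n π := by
    intro π hπ
    obtain ⟨x, hx, hxmax, hxπ⟩ := hco π v hπ ⟨_, hmem, (hmax_iff _ hmem).mpr rfl⟩
    rwa [← (hmax_iff x hx).mp hxmax]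
  obtain ⟨π, hπ⟩ := exists_mem_sortedCone v
  have h := apply_eq_of_mem_sortedCone_of_mem_swap_mul (hsorted π hπ)
    (hsorted _ (mem_sortedCone_swap_mul hv hπ))
  simpa [hc.ne'] using h

/-- If the centered ellipsoid `X = {x : xᵀQx ≤ 1}` (with `Q` symmetric positive
definite) is standard comonotone, then all diagonal entries of `Q⁻¹` are equal, all
off-diagonal entries of `Q⁻¹` are equal, and consequently `X` is
permutation-invariant. -/
theorem stmt_10 (n : ℕ) (Q : Matrix (Fin n) (Fin n) ℝ) (hQ : Q.PosDef)
    (X : Set (Fin n → ℝ)) (hXdef : X = {x | x ⬝ᵥ (Q *ᵥ x) ≤ 1})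
    (hco : StandardComonotone n X) :
    (∀ i j : Fin n, Q⁻¹ i i = Q⁻¹ j j) ∧
    (∀ i j k l : Fin n, i ≠ j → k ≠ l → Q⁻¹ i j = Q⁻¹ k l) ∧
    (∀ x ∈ X, ∀ σ : Equiv.Perm (Fin n), (fun i => x (σ i)) ∈ X) := by
  subst hXdef
  have hinv (v : Fin n → ℝ) (i j : Fin n) : v i = v j → (Q⁻¹ *ᵥ v) i = (Q⁻¹ *ᵥ v) j :=
    hco.inv_mulVec_apply_eq hQ
  have hsymm : Q⁻¹.IsSymm := isHermitian_iff_isSymm.mp hQ.inv.isHermitian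
  have hdiag := diag_eq_of_isSymm hinv hsymm
  have hoff : ∀ i j k l : Fin n, i ≠ j → k ≠ l → Q⁻¹ i j = Q⁻¹ k l :=
    fun _ _ _ _ => offDiag_eq_of_isSymm hinv hsymm
  refine ⟨hdiag, hoff, fun x hx σ => ?_⟩
  have hdet : IsUnit Q.det := (isUnit_iff_isUnit_det Q).mp hQ.isUnit
  have hQσ : Q.submatrix σ σ = Q := by
    rw [← nonsing_inv_nonsing_inv Q hdet, ← inv_submatrix_equiv,
      submatrix_equiv_eq_self_of_apply_eq hdiag hoff]
  show (x ∘ σ) ⬝ᵥ Q *ᵥ (x ∘ σ) ≤ 1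
  rwa [dotProduct_mulVec_comp_equiv hQσ]
end

section
/- Let X ⊆ R^n be standard comonotone, A ∈ R^{r×n}, and c ∈ R^r, and suppose max_{x∈X} c^T A x is attained. Then there exist thresholds λ̲ ≤ λ̄ and an optimal solution x* such that for every index i: (A^T c)_i > λ̄ implies x*_i > 0; λ̲ < (A^T c)_i < λ̄ implies x*_i = 0; and (A^T c)_i < λ̲ implies x*_i < 0. -/
open Matrix

/-- Thresholding rule for standard comonotone sets: if `max_{x∈X} cᵀAx` is attained,
there exist thresholds `λlo ≤ λhi` and an optimal solution `x*` such that entries of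
`Aᵀc` above `λhi` force `x*ᵢ > 0`, entries strictly between the thresholds force
`x*ᵢ = 0`, and entries below `λlo` force `x*ᵢ < 0`. -/
theorem stmt_14 (n r : ℕ) (X : Set (Fin n → ℝ)) (hco : StandardComonotone n X)
    (A : Matrix (Fin r) (Fin n) ℝ) (c : Fin r → ℝ)
    (hatt : ∃ x ∈ X, ∀ y ∈ X, ∑ i, (c ᵥ* A) i * y i ≤ ∑ i, (c ᵥ* A) i * x i) :
    ∃ lo hi : ℝ, lo ≤ hi ∧
      ∃ x ∈ X, (∀ y ∈ X, ∑ i, (c ᵥ* A) i * y i ≤ ∑ i, (c ᵥ* A) i * x i) ∧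
        ∀ i : Fin n,
          (hi < (c ᵥ* A) i → 0 < x i) ∧
          (lo < (c ᵥ* A) i → (c ᵥ* A) i < hi → x i = 0) ∧
          ((c ᵥ* A) i < lo → x i < 0) := by
  classical
  set v : Fin n → ℝ := c ᵥ* A with hv
  set π : Equiv.Perm (Fin n) := Tuple.sort (fun i => -(v i)) with hπ
  have hmono : Monotone ((fun i => -(v i)) ∘ π) := Tuple.monotone_sort _
  have hvcone : v ∈ sortedCone n π := by
    intro i j hij
    have := hmono hij
    simp only [Function.comp] at this
    linarith
  obtain ⟨x, hxX, hopt, hxcone⟩ := hco π v hvcone hatt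
  have key : ∀ i j, v j < v i → x j ≤ x i := by
    intro i j hvij
    rcases le_total (π.symm i) (π.symm j) with h | h
    · have := hxcone _ _ h
      simpa using this
    · have := hvcone _ _ h
      simp only [Equiv.apply_symm_apply] at this
      linarith
  have key2 : ∀ i j, x j < x i → v j ≤ v i := by
    intro i j hx
    by_contra h
    push_neg at h
    exact absurd (key j i h) (not_le.mpr hx)
  by_cases h0 : ∃ k, x k = 0
  · obtain ⟨k, hk⟩ := h0
    have hne1 : (Finset.univ.filter (fun i => x i ≤ 0)).Nonempty := ⟨k, by simp [hk]⟩
    have hne2 : (Finset.univ.filter (fun i => (0:ℝ) ≤ x i)).Nonempty := ⟨k, by simp [hk]⟩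
    refine ⟨(Finset.univ.filter (fun i => (0:ℝ) ≤ x i)).inf' hne2 v,
           (Finset.univ.filter (fun i => x i ≤ 0)).sup' hne1 v, ?_, x, hxX, hopt, ?_⟩
    · calc (Finset.univ.filter (fun i => (0:ℝ) ≤ x i)).inf' hne2 v
          ≤ v k := Finset.inf'_le v (by simp [hk])
        _ ≤ (Finset.univ.filter (fun i => x i ≤ 0)).sup' hne1 v :=
          Finset.le_sup' v (by simp [hk])
    · intro i
      refine ⟨?_, ?_, ?_⟩
      · intro hi
        by_contra hx
        push_neg at hx
        have : v i ≤ (Finset.univ.filter (fun i => x i ≤ 0)).sup' hne1 v :=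
          Finset.le_sup' v (by simp [hx])
        linarith
      · intro hlo hhi
        by_contra hx
        rcases lt_or_gt_of_ne hx with hneg | hpos
        · have : v i ≤ (Finset.univ.filter (fun i => (0:ℝ) ≤ x i)).inf' hne2 v := by
            apply Finset.le_inf'
            intro j hj
            simp only [Finset.mem_filter] at hj
            exact key2 j i (lt_of_lt_of_le hneg hj.2)
          linarith
        · have : (Finset.univ.filter (fun i => x i ≤ 0)).sup' hne1 v ≤ v i := by
            apply Finset.sup'_le
            intro j hj
            simp only [Finset.mem_filter] at hj
            exact key2 i j (lt_of_le_of_lt hj.2 hpos)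
          linarith
      · intro hi
        by_contra hx
        push_neg at hx
        have : (Finset.univ.filter (fun i => (0:ℝ) ≤ x i)).inf' hne2 v ≤ v i :=
          Finset.inf'_le v (by simp [hx])
        linarith
  · push_neg at h0
    by_cases hneg : ∃ k, x k < 0
    · obtain ⟨k, hk⟩ := hneg
      have hne : (Finset.univ.filter (fun i => x i < 0)).Nonempty := ⟨k, by simp [hk]⟩
      refine ⟨(Finset.univ.filter (fun i => x i < 0)).sup' hne v,
             (Finset.univ.filter (fun i => x i < 0)).sup' hne v, le_refl _, x, hxX, hopt, ?_⟩
      intro i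
      refine ⟨?_, ?_, ?_⟩
      · intro hi
        by_contra hx
        push_neg at hx
        have hx' : x i < 0 := lt_of_le_of_ne hx (h0 i)
        have : v i ≤ (Finset.univ.filter (fun i => x i < 0)).sup' hne v :=
          Finset.le_sup' v (by simp [hx'])
        linarith
      · intro hlo hhi
        linarith
      · intro hi
        by_contra hx
        push_neg at hx
        have hx' : 0 < x i := lt_of_le_of_ne hx (fun h => h0 i h.symm)
        have : (Finset.univ.filter (fun i => x i < 0)).sup' hne v ≤ v i := by
          apply Finset.sup'_le
          intro j hj
          simp only [Finset.mem_filter] at hj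
          exact key2 i j (lt_trans hj.2 hx')
        linarith
    · push_neg at hneg
      refine ⟨sInf (Set.range v) - 1, sInf (Set.range v) - 1, le_refl _, x, hxX, hopt, ?_⟩
      intro i
      have hpos : 0 < x i := lt_of_le_of_ne (hneg i) (fun h => h0 i h.symm)
      have hle : sInf (Set.range v) ≤ v i :=
        csInf_le (Set.Finite.bddBelow (Set.finite_range v)) ⟨i, rfl⟩
      exact ⟨fun _ => hpos, fun h1 h2 => absurd (h1.trans h2) (lt_irrefl _), fun h => by linarith⟩
end

section
/- Let D ⊆ R^r be open and convex, f: D → R upper semicontinuous and quasi-convex, and let Y ⊆ D be compact and nonempty (not necessarily convex). Then there exists c ∈ R^r such that max_{y∈Y} c^T y is attained and every maximizer of c^T y over Y is also a maximizer of f over Y. -/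
/-- An upper semicontinuous function attains its maximum on a nonempty compact set. -/
lemma usc_exists_max {E : Type*} [TopologicalSpace E] {f : E → ℝ} {Y : Set E}
    (hY : IsCompact Y) (hne : Y.Nonempty) (hf : UpperSemicontinuousOn f Y) :
    ∃ y ∈ Y, ∀ z ∈ Y, f z ≤ f y := by
  by_contra h
  push_neg at h
  -- for each x ∈ Y pick z x with f x < f (z x), and an open nbhd O x on which f < f (z x)
  have key : ∀ x ∈ Y, ∃ O : Set E, IsOpen O ∧ x ∈ O ∧ ∃ z ∈ Y, ∀ w ∈ O ∩ Y, f w < f z := by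
    intro x hx
    obtain ⟨z, hz, hfz⟩ := h x hx
    have := hf x hx (f z) hfz
    obtain ⟨O, hO, hxO, hsub⟩ := mem_nhdsWithin.1 this
    exact ⟨O, hO, hxO, z, hz, fun w hw => hsub ⟨hw.1, hw.2⟩⟩
  choose O hOopen hOx z hzY hlt using key
  obtain ⟨t, ht⟩ := hY.elim_nhds_subcover' (fun x hx => O x hx)
    (fun x hx => (hOopen x hx).mem_nhds (hOx x hx))
  -- take the maximum of f (z x) over the finite set t
  by_cases htne : t.Nonempty
  · obtain ⟨x₀, hx₀t, hx₀max⟩ := t.exists_max_image (fun x => f (z x.1 x.2)) htne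
    -- the point z x₀ is in Y, hence in some O x, so f (z x₀) < f (z x) ≤ f (z x₀)
    have hzY' : z x₀.1 x₀.2 ∈ Y := hzY _ _
    have := ht hzY'
    simp only [Set.mem_iUnion] at this
    obtain ⟨x, hxt, hxO'⟩ := this
    have h1 : f (z x₀.1 x₀.2) < f (z x.1 x.2) := hlt x.1 x.2 _ ⟨hxO', hzY'⟩
    have h2 : f (z x.1 x.2) ≤ f (z x₀.1 x₀.2) := hx₀max x hxt
    linarith
  · obtain ⟨y, hy⟩ := hne
    have := ht hy
    simp only [Set.mem_iUnion] at this
    obtain ⟨x, hxt, _⟩ := this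
    exact htne ⟨x, hxt⟩

/-- Reduction of quasi-convex maximization to a linear counterpart: for an upper
semicontinuous quasi-convex `f` on an open convex set `D` and a compact nonempty
`Y ⊆ D`, there is a cost vector `c` such that `max_{y∈Y} cᵀy` is attained and every
maximizer of `cᵀy` over `Y` also maximizes `f` over `Y`. -/
theorem stmt_15 (r : ℕ) (D : Set (Fin r → ℝ)) (hD : IsOpen D) (hDconv : Convex ℝ D)
    (f : (Fin r → ℝ) → ℝ) (hfq : QuasiconvexOn ℝ D f)
    (hfu : UpperSemicontinuousOn f D)
    (Y : Set (Fin r → ℝ)) (hY : IsCompact Y) (hYD : Y ⊆ D) (hne : Y.Nonempty) :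
    ∃ c : Fin r → ℝ,
      (∃ y ∈ Y, ∀ z ∈ Y, ∑ i, c i * z i ≤ ∑ i, c i * y i) ∧
      ∀ y ∈ Y, (∀ z ∈ Y, ∑ i, c i * z i ≤ ∑ i, c i * y i) →
        ∀ z ∈ Y, f z ≤ f y := by
  -- obtain a maximizer of f on Y
  obtain ⟨ybar, hybarY, hybarmax⟩ := usc_exists_max hY hne (hfu.mono hYD)
  set M := f ybar with hM
  -- strict sublevel set
  set S : Set (Fin r → ℝ) := {x ∈ D | f x < M} with hS
  have hSopen : IsOpen S := by
    rw [isOpen_iff_mem_nhds]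
    intro x hx
    have h1 : {x' | f x' < M} ∈ nhdsWithin x D := hfu x hx.1 M hx.2
    have h2 : D ∈ nhds x := hD.mem_nhds hx.1
    rw [nhdsWithin_eq_nhds.2 h2] at h1
    have : {x' | f x' < M} ∩ D ∈ nhds x := Filter.inter_mem h1 h2
    refine Filter.mem_of_superset this fun w hw => ⟨hw.2, hw.1⟩
  have hSconv : Convex ℝ S := by
    intro x hx y hy a b ha hb hab
    have hmem := hfq (max (f x) (f y)) ⟨hx.1, le_max_left _ _⟩ ⟨hy.1, le_max_right _ _⟩ ha hb hab
    exact ⟨hmem.1, lt_of_le_of_lt hmem.2 (max_lt hx.2 hy.2)⟩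
  have hybarS : ybar ∉ S := fun hybar => lt_irrefl M hybar.2
  obtain ⟨φ, hφ⟩ := geometric_hahn_banach_open_point hSconv hSopen hybarS
  -- express φ as a dot product
  set c : Fin r → ℝ := fun i => φ (fun j => if i = j then 1 else 0) with hc
  have hφeq : ∀ z : Fin r → ℝ, φ z = ∑ i, c i * z i := by
    intro z
    conv_lhs => rw [pi_eq_sum_univ z]
    rw [map_sum]
    refine Finset.sum_congr rfl fun i _ => ?_
    rw [map_smul]
    simp [hc, mul_comm]
  -- the linear max is attained on the compact set Y
  have hcont : Continuous fun x : Fin r → ℝ => φ x := φ.continuous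
  obtain ⟨y₀, hy₀Y, hy₀max⟩ := hY.exists_isMaxOn hne (hcont.continuousOn)
  refine ⟨c, ⟨y₀, hy₀Y, fun z hz => by
    rw [← hφeq, ← hφeq]; exact hy₀max hz⟩, ?_⟩
  intro y hyY hymax z hz
  -- y maximizes cᵀ·; show f y = M
  have hyM : f y = M := by
    by_contra hne'
    have hylt : f y < M := lt_of_le_of_ne (hybarmax y hyY) hne'
    have hyS : y ∈ S := ⟨hYD hyY, hylt⟩
    have h1 : φ y < φ ybar := hφ y hyS
    have h2 : φ ybar ≤ φ y := by
      rw [hφeq, hφeq]; exact hymax ybar hybarY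
    linarith
  rw [hyM]
  exact hybarmax z hz
end

section
/- Let S ⊆ {0,1}^n be finite and nonempty, P = {x ∈ R^n : M x ≤ b} with M ∈ R^{m×n}, b ∈ R^m, and suppose conv(S ∩ P) = conv(S) ∩ P and S ∩ P ≠ ∅. Then for every v ∈ R^n there exists γ ∈ R^m_+ such that x̄ maximizes v^T x over S ∩ P if and only if: x̄ ∈ S ∩ P, (M x̄)_i = b_i for every i with γ_i > 0, and x̄ maximizes (v − M^T γ)^T x over S. -/
/-!
By the hypothesis on convex hulls, the maximum `c` of `vᵀx` over `S ∩ P` is also the maximum over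
the polytope `conv S ∩ P`. Linear programming duality for this maximum, i.e. Farkas' lemma applied
to the finitely many points of `S`, yields `γ ≥ 0` with `(v - Mᵀγ)ᵀy ≤ c - γᵀb` for all `y ∈ S`;
the equivalence is then complementary slackness. Farkas' lemma comes from separating a point from
a finitely generated cone, which is closed because, by Carathéodory's theorem for cones, it is a
finite union of images of orthants under injective linear maps.
-/

open Finset Matrix

section FinitelyGeneratedCone

variable {ι E : Type*} [AddCommGroup E] [Module ℝ E]

theorem exists_nonneg_sum_erase_eq_of_not_linearIndepOn [DecidableEq ι] {g : ι → E}
    {T : Finset ι} (hT : ¬LinearIndepOn ℝ g T) {c : ι → ℝ} (hc : ∀ j ∈ T, 0 ≤ c j) :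
    ∃ i ∈ T, ∃ c' : ι → ℝ, (∀ j ∈ T.erase i, 0 ≤ c' j) ∧
      ∑ j ∈ T.erase i, c' j • g j = ∑ j ∈ T, c j • g j := by
  obtain ⟨d, hd, i, hiT, hdi⟩ := not_linearIndepOn_finset_iff.mp hT
  wlog hpos : 0 < d i generalizing d
  · refine this (-d) (by simp [neg_smul, hd]) (by simpa using hdi) ?_
    simpa using lt_of_le_of_ne (not_lt.mp hpos) hdi
  obtain ⟨i₀, hi₀, hmin⟩ := (T.filter (0 < d ·)).exists_min_image (fun j => c j / d j)
    ⟨i, mem_filter.mpr ⟨hiT, hpos⟩⟩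
  rw [mem_filter] at hi₀
  set t := c i₀ / d i₀
  have ht : 0 ≤ t := div_nonneg (hc i₀ hi₀.1) hi₀.2.le
  -- `t` is the largest step along the relation `d` that keeps the coefficients nonnegative
  refine ⟨i₀, hi₀.1, fun j => c j - t * d j, fun j hj => ?_, ?_⟩
  · have hjT := mem_of_mem_erase hj
    rcases lt_or_ge 0 (d j) with hdj | hdj
    · have := hmin j (mem_filter.mpr ⟨hjT, hdj⟩)
      rw [le_div_iff₀ hdj] at this
      linarith
    · nlinarith [hc j hjT]
  · have hzero : (c i₀ - t * d i₀) • g i₀ = 0 := by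
      rw [div_mul_cancel₀ _ hi₀.2.ne', sub_self, zero_smul]
    rw [sum_erase (f := fun j => (c j - t * d j) • g j) T hzero]
    simp only [sub_smul, mul_smul, sum_sub_distrib, ← smul_sum, hd, smul_zero, sub_zero]

theorem exists_linearIndepOn_nonneg_sum_eq (g : ι → E) (T : Finset ι) (c : ι → ℝ)
    (hc : ∀ j ∈ T, 0 ≤ c j) :
    ∃ T' ⊆ T, LinearIndepOn ℝ g T' ∧ ∃ c' : ι → ℝ, (∀ j ∈ T', 0 ≤ c' j) ∧
      ∑ j ∈ T', c' j • g j = ∑ j ∈ T, c j • g j := by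
  classical
  induction T using Finset.strongInduction generalizing c with
  | H T ih =>
    by_cases hT : LinearIndepOn ℝ g T
    · exact ⟨T, subset_rfl, hT, c, hc, rfl⟩
    obtain ⟨i, hi, c', hc', hsum⟩ := exists_nonneg_sum_erase_eq_of_not_linearIndepOn hT hc
    obtain ⟨T', hT'T, hli, c'', hc'', hsum'⟩ := ih _ (erase_ssubset hi) c' hc'
    exact ⟨T', hT'T.trans (erase_subset i T), hli, c'', hc'', hsum'.trans hsum⟩

theorem PointedCone.mem_hull_range_iff [Fintype ι] {g : ι → E} {x : E} :
    x ∈ PointedCone.hull ℝ (Set.range g) ↔ ∃ c : ι → ℝ, 0 ≤ c ∧ ∑ i, c i • g i = x := by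
  rw [Submodule.mem_span_range_iff_exists_fun]
  constructor
  · rintro ⟨c, rfl⟩
    exact ⟨fun i => c i, fun i => (c i).2, rfl⟩
  · rintro ⟨c, hc, rfl⟩
    exact ⟨fun i => ⟨c i, hc i⟩, rfl⟩

theorem PointedCone.hull_range_eq_iUnion_linearIndepOn [Fintype ι] (g : ι → E) :
    (PointedCone.hull ℝ (Set.range g) : Set E) =
      ⋃ (T : Finset ι) (_ : LinearIndepOn ℝ g T),
        Fintype.linearCombination ℝ (fun j : T => g j) '' Set.Ici 0 := by
  ext x
  simp only [Set.mem_iUnion, Set.mem_image, Set.mem_Ici, Fintype.linearCombination_apply]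
  constructor
  · intro hx
    obtain ⟨c, hc, rfl⟩ := PointedCone.mem_hull_range_iff.mp hx
    obtain ⟨T, -, hT, c', hc', hsum⟩ := exists_linearIndepOn_nonneg_sum_eq g univ c fun i _ => hc i
    refine ⟨T, hT, fun j => c' j, fun j => hc' j j.2, ?_⟩
    rw [sum_coe_sort T (fun j => c' j • g j), hsum]
  · rintro ⟨T, -, c, hc, rfl⟩
    exact Submodule.sum_mem _ fun j _ =>
      PointedCone.smul_mem _ (hc j) (PointedCone.subset_hull (Set.mem_range_self _))

variable [TopologicalSpace E] [IsTopologicalAddGroup E] [ContinuousSMul ℝ E] [T2Space E]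

theorem LinearIndependent.isClosed_image_nonneg [Fintype ι] {g : ι → E}
    (hg : LinearIndependent ℝ g) :
    IsClosed (Fintype.linearCombination ℝ g '' Set.Ici 0) :=
  (LinearMap.isClosedEmbedding_of_injective
    (LinearMap.ker_eq_bot.mpr hg.fintypeLinearCombination_injective)).isClosedMap _ isClosed_Ici

theorem PointedCone.isClosed_hull_range [Finite ι] (g : ι → E) :
    IsClosed (PointedCone.hull ℝ (Set.range g) : Set E) := by
  have := Fintype.ofFinite ι
  rw [hull_range_eq_iUnion_linearIndepOn]
  exact isClosed_iUnion_of_finite fun T => isClosed_iUnion_of_finite fun hT =>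
    LinearIndependent.isClosed_image_nonneg hT

end FinitelyGeneratedCone

theorem Matrix.exists_nonneg_le_mulVec_of_forall_vecMul_nonpos {ι κ : Type*} [Fintype ι]
    [Fintype κ] (A : Matrix ι κ ℝ) (d : ι → ℝ)
    (h : ∀ μ : ι → ℝ, 0 ≤ μ → μ ᵥ* A ≤ 0 → μ ⬝ᵥ d ≤ 0) :
    ∃ γ : κ → ℝ, 0 ≤ γ ∧ d ≤ A *ᵥ γ := by
  classical
  -- `d ≤ A *ᵥ γ` for some `γ ≥ 0` iff `d` is in the cone spanned by the columns of `A` and the `-eₛ`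
  let g : κ ⊕ ι → ι → ℝ := Sum.elim (fun j => Aᵀ j) (fun s => -Pi.single s 1)
  let C : ProperCone ℝ (ι → ℝ) :=
    ⟨PointedCone.hull ℝ (Set.range g), PointedCone.isClosed_hull_range g⟩
  by_cases hd : d ∈ C
  · obtain ⟨c, hc, rfl⟩ := PointedCone.mem_hull_range_iff.mp hd
    refine ⟨fun j => c (.inl j), fun j => hc _, fun s => ?_⟩
    simpa [g, Fintype.sum_sum_type, mulVec, dotProduct, Pi.single_apply, mul_comm] using hc (.inr s)
  · obtain ⟨f, hfC, hfd⟩ := C.hyperplane_separation_point hd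
    set μ : ι → ℝ := fun s => -f (Pi.single s 1)
    have hf : ∀ w, f w = -(μ ⬝ᵥ w) := by
      intro w
      conv_lhs => rw [pi_eq_sum_univ' w, map_sum]
      simp [μ, dotProduct, mul_comm]
    have hgen : ∀ r, 0 ≤ f (g r) := fun r => hfC _ (PointedCone.subset_hull ⟨r, rfl⟩)
    have hμ : 0 ≤ μ := fun s => by simpa [g, μ] using hgen (.inr s)
    have hA : μ ᵥ* A ≤ 0 := fun j => by
      have := hgen (.inl j)
      simp only [g, Sum.elim_inl, hf] at this
      simpa [vecMul, dotProduct, mul_comm] using this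
    have := h μ hμ hA
    rw [hf] at hfd
    linarith

theorem LinearMap.sum_smul_map_centerMass_sub {R ι X E : Type*} [Field R] [AddCommGroup X]
    [Module R X] [AddCommGroup E] [Module R E] (ℓ : X →ₗ[R] E) (a : E) (t : Finset ι)
    (μ : ι → R) (z : ι → X) (hμ : ∑ i ∈ t, μ i ≠ 0) :
    (∑ i ∈ t, μ i) • (ℓ (t.centerMass μ z) - a) = ∑ i ∈ t, μ i • (ℓ (z i) - a) := by
  simp only [centerMass, map_smul, map_sum, smul_sub, smul_smul, mul_inv_cancel₀ hμ, one_smul,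
    sum_sub_distrib, sum_smul]

theorem sub_vecMul_dotProduct {R σ κ : Type*} [Ring R] [Fintype σ] [Fintype κ] (v : σ → R)
    (γ : κ → R) (M : Matrix κ σ R) (y : σ → R) :
    (v - γ ᵥ* M) ⬝ᵥ y = v ⬝ᵥ y - γ ⬝ᵥ (M *ᵥ y) := by
  rw [sub_dotProduct, dotProduct_mulVec]

theorem exists_nonneg_sub_vecMul_dotProduct_le_of_convexHull {σ κ : Type*} [Fintype σ] [Fintype κ]
    {S : Set (σ → ℝ)} (hS : S.Finite) (M : Matrix κ σ ℝ) (b : κ → ℝ) (v : σ → ℝ) (c : ℝ)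
    (h : ∀ x ∈ convexHull ℝ S, M *ᵥ x ≤ b → v ⬝ᵥ x ≤ c) :
    ∃ γ : κ → ℝ, 0 ≤ γ ∧ ∀ y ∈ S, (v - γ ᵥ* M) ⬝ᵥ y ≤ c - γ ⬝ᵥ b := by
  have := hS.fintype
  let A : Matrix S κ ℝ := of fun s => M *ᵥ s - b
  obtain ⟨γ, hγ, hd⟩ := A.exists_nonneg_le_mulVec_of_forall_vecMul_nonpos (fun s => v ⬝ᵥ s - c) <| by
    intro μ hμ hA
    rcases (sum_nonneg fun s _ => hμ s : 0 ≤ ∑ s, μ s).eq_or_lt with hw | hw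
    · have : μ = 0 := funext ((sum_eq_zero_iff_of_nonneg fun s _ => hμ s).mp hw.symm · (mem_univ _))
      simp [this]
    set x := (univ : Finset S).centerMass μ (fun s => (s : σ → ℝ))
    have hx : x ∈ convexHull ℝ S :=
      centerMass_mem_convexHull _ (fun s _ => hμ s) hw fun s _ => s.2
    have hMx : (∑ s, μ s) • (M *ᵥ x - b) = μ ᵥ* A := by
      rw [vecMul_eq_sum]
      exact M.mulVecLin.sum_smul_map_centerMass_sub b _ _ _ hw.ne'
    have hvx : (∑ s, μ s) * (v ⬝ᵥ x - c) = μ ⬝ᵥ fun s => v ⬝ᵥ s - c :=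
      LinearMap.sum_smul_map_centerMass_sub (dotProductBilin ℝ ℝ v) c _ _ _ hw.ne'
    have hxP : M *ᵥ x ≤ b := by
      have := hMx ▸ hA
      rwa [← smul_zero (∑ s, μ s), smul_le_smul_iff_of_pos_left hw, sub_nonpos] at this
    rw [← hvx]
    exact mul_nonpos_of_nonneg_of_nonpos hw.le (sub_nonpos.mpr (h x hx hxP))
  refine ⟨γ, hγ, fun y hy => ?_⟩
  have hy' : v ⬝ᵥ y - c ≤ γ ⬝ᵥ (M *ᵥ y - b) := by
    simpa only [A, mulVec, of_apply, dotProduct_comm _ γ] using hd ⟨y, hy⟩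
  rw [dotProduct_sub] at hy'
  rw [sub_vecMul_dotProduct]
  linarith

section ComplementarySlackness

variable {σ κ : Type*} [Fintype σ] [Fintype κ] {M : Matrix κ σ ℝ} {b : κ → ℝ} {v x y : σ → ℝ}
  {γ : κ → ℝ}

theorem dotProduct_eq_zero_iff_of_nonneg {w : κ → ℝ} (hγ : 0 ≤ γ) (hw : 0 ≤ w) :
    γ ⬝ᵥ w = 0 ↔ ∀ i, 0 < γ i → w i = 0 := by
  rw [dotProduct, sum_eq_zero_iff_of_nonneg fun i _ => mul_nonneg (hγ i) (hw i)]
  simp only [mem_univ, true_implies, mul_eq_zero]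
  exact forall_congr' fun i =>
    ⟨fun h hi => h.resolve_left hi.ne', fun h => (hγ i).eq_or_lt.imp Eq.symm h⟩

theorem dotProduct_le_of_complementarySlackness (hγ : 0 ≤ γ) (hx : γ ⬝ᵥ (b - M *ᵥ x) = 0)
    (hxy : (v - γ ᵥ* M) ⬝ᵥ y ≤ (v - γ ᵥ* M) ⬝ᵥ x) (hy : M *ᵥ y ≤ b) : v ⬝ᵥ y ≤ v ⬝ᵥ x := by
  have : 0 ≤ γ ⬝ᵥ (b - M *ᵥ y) := dotProduct_nonneg_of_nonneg hγ (sub_nonneg.mpr hy)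
  rw [sub_vecMul_dotProduct, sub_vecMul_dotProduct] at hxy
  rw [dotProduct_sub] at this hx
  linarith

theorem complementarySlackness_of_le_dotProduct {S : Set (σ → ℝ)} {c : ℝ}
    (hS : ∀ y ∈ S, (v - γ ᵥ* M) ⬝ᵥ y ≤ c - γ ⬝ᵥ b) (hγ : 0 ≤ γ) (hxS : x ∈ S)
    (hx : M *ᵥ x ≤ b) (hcx : c ≤ v ⬝ᵥ x) :
    γ ⬝ᵥ (b - M *ᵥ x) = 0 ∧ ∀ y ∈ S, (v - γ ᵥ* M) ⬝ᵥ y ≤ (v - γ ᵥ* M) ⬝ᵥ x := by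
  have hslack : 0 ≤ γ ⬝ᵥ (b - M *ᵥ x) := dotProduct_nonneg_of_nonneg hγ (sub_nonneg.mpr hx)
  have hLx := hS x hxS
  rw [sub_vecMul_dotProduct] at hLx
  rw [dotProduct_sub] at hslack ⊢
  refine ⟨by linarith, fun y hy => ?_⟩
  have hLy := hS y hy
  simp only [sub_vecMul_dotProduct] at hLy ⊢
  linarith

end ComplementarySlackness

theorem stmt_17_general (n m : ℕ) (S : Set (Fin n → ℝ)) (hSfin : S.Finite)
    (M : Matrix (Fin m) (Fin n) ℝ) (b : Fin m → ℝ)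
    (P : Set (Fin n → ℝ)) (hP : P = {x | ∀ i, (M *ᵥ x) i ≤ b i})
    (hconv : convexHull ℝ (S ∩ P) = convexHull ℝ S ∩ P)
    (hne : (S ∩ P).Nonempty) :
    ∀ v : Fin n → ℝ, ∃ γ : Fin m → ℝ, (∀ i, 0 ≤ γ i) ∧
      ∀ xb : Fin n → ℝ,
        (xb ∈ S ∩ P ∧ ∀ y ∈ S ∩ P, ∑ i, v i * y i ≤ ∑ i, v i * xb i) ↔
        (xb ∈ S ∩ P ∧ (∀ i, 0 < γ i → (M *ᵥ xb) i = b i) ∧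
          ∀ y ∈ S, ∑ i, (v i - (γ ᵥ* M) i) * y i ≤ ∑ i, (v i - (γ ᵥ* M) i) * xb i) := by
  subst hP
  intro v
  obtain ⟨x₀, hx₀, hmax⟩ := Set.exists_max_image _ (v ⬝ᵥ ·) (hSfin.inter_of_left _) hne
  have hbound (x : Fin n → ℝ) (hx : x ∈ convexHull ℝ S) (hMx : M *ᵥ x ≤ b) : v ⬝ᵥ x ≤ v ⬝ᵥ x₀ :=
    convexHull_min hmax (convex_halfSpace_le (dotProductBilin ℝ ℝ v).isLinear _)
      (hconv ▸ ⟨hx, hMx⟩)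
  obtain ⟨γ, hγ, hS⟩ := exists_nonneg_sub_vecMul_dotProduct_le_of_convexHull hSfin M b v _ hbound
  refine ⟨γ, hγ, fun xb => and_congr_right fun ⟨hxbS, hxb⟩ => ?_⟩
  have hslack := dotProduct_eq_zero_iff_of_nonneg hγ (sub_nonneg.mpr hxb)
  simp only [Pi.sub_apply, sub_eq_zero, eq_comm (a := b _)] at hslack
  rw [← hslack]
  exact ⟨fun hopt => complementarySlackness_of_le_dotProduct hS hγ hxbS hxb (hopt x₀ hx₀),
    fun ⟨hx, hxy⟩ y ⟨hyS, hy⟩ => dotProduct_le_of_complementarySlackness hγ hx (hxy y hyS) hy⟩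

/-- Eliminating affine restrictions via Lagrange multipliers: if
`conv(S ∩ P) = conv(S) ∩ P` with `S ⊆ {0,1}ⁿ` finite and `P = {x : Mx ≤ b}`, then for
every `v` there is `γ ≥ 0` such that `x̄` maximizes `vᵀx` over `S ∩ P` iff
`x̄ ∈ S ∩ P`, the constraints with positive multipliers are tight at `x̄`, and `x̄`
maximizes `(v - Mᵀγ)ᵀx` over `S`. -/
theorem stmt_17 (n m : ℕ) (S : Set (Fin n → ℝ)) (hSfin : S.Finite)
    (hS01 : ∀ x ∈ S, ∀ i, x i = 0 ∨ x i = 1)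
    (M : Matrix (Fin m) (Fin n) ℝ) (b : Fin m → ℝ)
    (P : Set (Fin n → ℝ)) (hP : P = {x | ∀ i, (M *ᵥ x) i ≤ b i})
    (hconv : convexHull ℝ (S ∩ P) = convexHull ℝ S ∩ P)
    (hne : (S ∩ P).Nonempty) :
    ∀ v : Fin n → ℝ, ∃ γ : Fin m → ℝ, (∀ i, 0 ≤ γ i) ∧
      ∀ xb : Fin n → ℝ,
        (xb ∈ S ∩ P ∧ ∀ y ∈ S ∩ P, ∑ i, v i * y i ≤ ∑ i, v i * xb i) ↔
        (xb ∈ S ∩ P ∧ (∀ i, 0 < γ i → (M *ᵥ xb) i = b i) ∧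
          ∀ y ∈ S, ∑ i, (v i - (γ ᵥ* M) i) * y i ≤ ∑ i, (v i - (γ ᵥ* M) i) * xb i) :=
  stmt_17_general n m S hSfin M b P hP hconv hne
end
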